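/- arXiv:math/0301215 — 5 statements merged into one kernel-verified Lean document; each statement's English description precedes it below -/
import Mathlib

section
/- Let A, B be n×n nilpotent commuting matrices over an algebraically closed field K and let s_B be as above. Then for every positive integer m and every scalar value of x, rank((B + x·A^{s_B})^m) ≤ rank(B^m); equivalently this rank inequality holds generically (over the function field K(x)). -/
/-- The nilpotent Jordan matrix with blocks of sizes `u 1, …, u t`. -/
def jordanMatrix {t : ℕ} (u : Fin t → ℕ) (K : Type*) [Field K] :
    Matrix (Σ h : Fin t, Fin (u h)) (Σ h : Fin t, Fin (u h)) K :=
  fun x y => if x.1 = y.1 ∧ (y.2 : ℕ) = (x.2 : ℕ) + 1 then 1 else 0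

namespace RankPerturbAux
set_option linter.unusedSectionVars false

open Matrix Finset Polynomial

variable {K : Type*} [Field K] {t : ℕ} {u : Fin t → ℕ}

lemma jordan_apply (i j : Fin t) (p : Fin (u i)) (q : Fin (u j)) :
    jordanMatrix u K ⟨i, p⟩ ⟨j, q⟩ = if i = j ∧ (q : ℕ) = (p : ℕ) + 1 then 1 else 0 := rfl

/-- entry congruence -/
lemma entry_congr (A : Matrix (Σ h : Fin t, Fin (u h)) (Σ h : Fin t, Fin (u h)) K)
    {i j : Fin t} {p p' : Fin (u i)} {q q' : Fin (u j)}
    (hp : (p : ℕ) = p') (hq : (q : ℕ) = q') :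
    A ⟨i, p⟩ ⟨j, q⟩ = A ⟨i, p'⟩ ⟨j, q'⟩ := by
  obtain rfl : p = p' := Fin.ext hp
  obtain rfl : q = q' := Fin.ext hq
  rfl

lemma mul_jordan_apply (A : Matrix (Σ h : Fin t, Fin (u h)) (Σ h : Fin t, Fin (u h)) K)
    (z : Σ h : Fin t, Fin (u h)) (j : Fin t) (q : Fin (u j)) :
    (A * jordanMatrix u K) z ⟨j, q⟩ =
      if h : 0 < (q : ℕ) then A z ⟨j, ⟨(q : ℕ) - 1, by omega⟩⟩ else 0 := by
  rw [Matrix.mul_apply]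
  split_ifs with h
  · trans A z ⟨j, ⟨(q : ℕ) - 1, by omega⟩⟩ *
        jordanMatrix u K ⟨j, ⟨(q : ℕ) - 1, by omega⟩⟩ ⟨j, q⟩
    · apply Finset.sum_eq_single
      · rintro ⟨k, r⟩ - hne
        rw [jordan_apply, if_neg, mul_zero]
        rintro ⟨rfl, h2⟩
        exact hne (by simp only [Sigma.mk.inj_iff, heq_eq_eq, true_and]; exact Fin.ext (by simp only [Fin.val_mk]; omega))
      · simp
    · rw [jordan_apply, if_pos ⟨rfl, by simp; omega⟩, mul_one]
  · apply Finset.sum_eq_zero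
    rintro ⟨k, r⟩ -
    rw [jordan_apply, if_neg, mul_zero]
    rintro ⟨rfl, h2⟩; omega

lemma jordan_mul_apply (A : Matrix (Σ h : Fin t, Fin (u h)) (Σ h : Fin t, Fin (u h)) K)
    (i : Fin t) (p : Fin (u i)) (z : Σ h : Fin t, Fin (u h)) :
    (jordanMatrix u K * A) ⟨i, p⟩ z =
      if h : (p : ℕ) + 1 < u i then A ⟨i, ⟨(p : ℕ) + 1, h⟩⟩ z else 0 := by
  rw [Matrix.mul_apply]
  split_ifs with h
  · trans jordanMatrix u K ⟨i, p⟩ ⟨i, ⟨(p : ℕ) + 1, h⟩⟩ * A ⟨i, ⟨(p : ℕ) + 1, h⟩⟩ z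
    · apply Finset.sum_eq_single
      · rintro ⟨k, r⟩ - hne
        rw [jordan_apply, if_neg, zero_mul]
        rintro ⟨rfl, h2⟩
        exact hne (by simp only [Sigma.mk.inj_iff, heq_eq_eq, true_and]; exact Fin.ext (by simp only [Fin.val_mk]; omega))
      · simp
    · rw [jordan_apply, if_pos ⟨rfl, by simp⟩, one_mul]
  · apply Finset.sum_eq_zero
    rintro ⟨k, r⟩ -
    rw [jordan_apply, if_neg, zero_mul]
    rintro ⟨rfl, h2⟩; omega


section Commutant

variable {A : Matrix (Σ h : Fin t, Fin (u h)) (Σ h : Fin t, Fin (u h)) K}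
  (hc : A * jordanMatrix u K = jordanMatrix u K * A)

include hc

lemma shift_entry {i j : Fin t} {p p' : Fin (u i)} {q q' : Fin (u j)}
    (hp' : (p' : ℕ) = (p : ℕ) + 1) (hq' : (q' : ℕ) = (q : ℕ) + 1) :
    A ⟨i, p⟩ ⟨j, q⟩ = A ⟨i, p'⟩ ⟨j, q'⟩ := by
  have h := congrFun (congrFun hc ⟨i, p⟩) ⟨j, q'⟩
  rw [mul_jordan_apply, jordan_mul_apply, dif_pos (by omega), dif_pos (by omega)] at h
  calc A ⟨i, p⟩ ⟨j, q⟩ = A ⟨i, p⟩ ⟨j, ⟨(q' : ℕ) - 1, by omega⟩⟩ :=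
        entry_congr A rfl (by simp only [Fin.val_mk]; omega)
    _ = A ⟨i, ⟨(p : ℕ) + 1, by omega⟩⟩ ⟨j, q'⟩ := h
    _ = A ⟨i, p'⟩ ⟨j, q'⟩ := entry_congr A (by simp only [Fin.val_mk]; omega) rfl

lemma last_row {i j : Fin t} (p : Fin (u i)) (q : Fin (u j))
    (hp : (p : ℕ) + 1 = u i) (hq : (q : ℕ) + 1 < u j) :
    A ⟨i, p⟩ ⟨j, q⟩ = 0 := by
  have h := congrFun (congrFun hc ⟨i, p⟩) ⟨j, ⟨(q : ℕ) + 1, hq⟩⟩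
  rw [mul_jordan_apply, jordan_mul_apply, dif_pos (by simp), dif_neg (by omega)] at h
  rw [← h]
  exact entry_congr A rfl (by simp)

lemma first_col {i j : Fin t} (p : Fin (u i)) (q : Fin (u j))
    (hp : 0 < (p : ℕ)) (hq : (q : ℕ) = 0) :
    A ⟨i, p⟩ ⟨j, q⟩ = 0 := by
  have h := congrFun (congrFun hc ⟨i, ⟨(p : ℕ) - 1, by omega⟩⟩) ⟨j, q⟩
  rw [mul_jordan_apply, jordan_mul_apply, dif_neg (by simp [hq]), dif_pos (by simp; omega)] at h
  calc A ⟨i, p⟩ ⟨j, q⟩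
      = A ⟨i, ⟨((⟨(p : ℕ) - 1, by omega⟩ : Fin (u i)) : ℕ) + 1, by simp; omega⟩⟩ ⟨j, q⟩ :=
        entry_congr A (by simp only [Fin.val_mk]; omega) rfl
    _ = 0 := h.symm

/-- below the `max (0, u j - u i)`-diagonal in the sense of too small column vs `u j - u i`. -/
lemma support_upper {i j : Fin t} (p : Fin (u i)) (q : Fin (u j))
    (h : (q : ℕ) + u i < u j + p) :
    A ⟨i, p⟩ ⟨j, q⟩ = 0 := by
  suffices H : ∀ n (p : Fin (u i)) (q : Fin (u j)), u i - 1 - (p : ℕ) = n →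
      (q : ℕ) + u i < u j + p → A ⟨i, p⟩ ⟨j, q⟩ = 0 from H _ p q rfl h
  intro n
  induction n with
  | zero =>
    intro p q hn h
    exact last_row hc p q (by omega) (by omega)
  | succ n ih =>
    intro p q hn h
    have hp1 : (p : ℕ) + 1 < u i := by omega
    have hq1 : (q : ℕ) + 1 < u j := by omega
    rw [shift_entry hc (p' := ⟨(p : ℕ) + 1, hp1⟩) (q' := ⟨(q : ℕ) + 1, hq1⟩) rfl rfl]
    exact ih _ _ (by simp; omega) (by simp; omega)

/-- below the main diagonal -/
lemma support_lower {i j : Fin t} (p : Fin (u i)) (q : Fin (u j))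
    (h : (q : ℕ) < p) :
    A ⟨i, p⟩ ⟨j, q⟩ = 0 := by
  suffices H : ∀ n (p : Fin (u i)) (q : Fin (u j)), (q : ℕ) = n →
      (q : ℕ) < p → A ⟨i, p⟩ ⟨j, q⟩ = 0 from H _ p q rfl h
  intro n
  induction n with
  | zero =>
    intro p q hn h
    exact first_col hc p q (by omega) hn
  | succ n ih =>
    intro p q hn h
    rw [← shift_entry hc (p := ⟨(p : ℕ) - 1, by omega⟩) (q := ⟨(q : ℕ) - 1, by omega⟩)
      (by simp; omega) (by simp; omega)]
    exact ih _ _ (by simp; omega) (by simp; omega)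

lemma diag_const {i j : Fin t} (p : Fin (u i)) (q : Fin (u j)) (h : (p : ℕ) ≤ q) :
    A ⟨i, p⟩ ⟨j, q⟩ =
      A ⟨i, ⟨0, by omega⟩⟩ ⟨j, ⟨(q : ℕ) - (p : ℕ), by omega⟩⟩ := by
  suffices H : ∀ n (p : Fin (u i)) (q : Fin (u j)), (p : ℕ) = n → (p : ℕ) ≤ q →
      A ⟨i, p⟩ ⟨j, q⟩ = A ⟨i, ⟨0, by omega⟩⟩ ⟨j, ⟨(q : ℕ) - (p : ℕ), by omega⟩⟩ from
    H _ p q rfl h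
  intro n
  induction n with
  | zero =>
    intro p q hn h
    exact entry_congr A (by simp only [Fin.val_mk]; omega) (by simp only [Fin.val_mk]; omega)
  | succ n ih =>
    intro p q hn h
    rw [← shift_entry hc (p := ⟨(p : ℕ) - 1, by omega⟩) (q := ⟨(q : ℕ) - 1, by omega⟩)
      (by simp; omega) (by simp; omega)]
    rw [ih _ _ (by simp; omega) (by simp; omega)]
    exact entry_congr A rfl (by simp; omega)

end Commutant


section Lam

variable (hupos : ∀ h, 0 < u h)

/-- The leading coefficient of the `(i,j)` block of a matrix commuting with the
Jordan matrix: the entry at position `(0, max 0 (u j - u i))`. -/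
def lam (A : Matrix (Σ h : Fin t, Fin (u h)) (Σ h : Fin t, Fin (u h)) K) (i j : Fin t) : K :=
  A ⟨i, ⟨0, hupos i⟩⟩ ⟨j, ⟨u j - min (u i) (u j), by have := hupos i; have := hupos j; omega⟩⟩

lemma lam_smul (c : K) (A : Matrix (Σ h : Fin t, Fin (u h)) (Σ h : Fin t, Fin (u h)) K)
    (i j : Fin t) : lam hupos (c • A) i j = c * lam hupos A i j := rfl

variable {A A' : Matrix (Σ h : Fin t, Fin (u h)) (Σ h : Fin t, Fin (u h)) K}
  (hc : A * jordanMatrix u K = jordanMatrix u K * A)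
  (hc' : A' * jordanMatrix u K = jordanMatrix u K * A')

include hc hc'

lemma term_zero {i j k : Fin t} (r : Fin (u k)) (p0 : Fin (u i)) (q0 : Fin (u j))
    (hp0 : (p0 : ℕ) = 0) (hq0 : (q0 : ℕ) = u j - min (u i) (u j))
    (h : ¬((min (u i) (u j) ≤ u k ∧ u k ≤ max (u i) (u j)) ∧
      (r : ℕ) = u k - min (u i) (u k))) :
    A ⟨i, p0⟩ ⟨k, r⟩ * A' ⟨k, r⟩ ⟨j, q0⟩ = 0 := by
  by_cases h1 : (r : ℕ) + u i < u k + p0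
  · rw [support_upper hc _ _ h1, zero_mul]
  by_cases h2 : (q0 : ℕ) < r
  · rw [support_lower hc' _ _ h2, mul_zero]
  by_cases h3 : (q0 : ℕ) + u k < u j + r
  · rw [support_upper hc' _ _ h3, mul_zero]
  exfalso
  have hr := r.isLt
  have hq := q0.isLt
  have hp := p0.isLt
  omega

lemma lam_mul (i j : Fin t) :
    lam hupos (A * A') i j = ∑ k ∈ Finset.univ.filter
      (fun k => min (u i) (u j) ≤ u k ∧ u k ≤ max (u i) (u j)),
      lam hupos A i k * lam hupos A' k j := by
  rw [lam, Matrix.mul_apply, ← Finset.univ_sigma_univ, Finset.sum_sigma, Finset.sum_filter]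
  apply Finset.sum_congr rfl
  rintro k -
  by_cases hP : min (u i) (u j) ≤ u k ∧ u k ≤ max (u i) (u j)
  · rw [if_pos hP]
    have hik : u k - min (u i) (u k) < u k := by have := hupos i; have := hupos k; omega
    rw [Finset.sum_eq_single (⟨u k - min (u i) (u k), hik⟩ : Fin (u k))]
    · congr 1
      rw [diag_const hc' _ _ (by simp only [Fin.val_mk]; omega)]
      exact entry_congr A' rfl (by simp only [Fin.val_mk]; omega)
    · rintro r - hne
      exact term_zero hc hc' r _ _ rfl rfl (by
        rintro ⟨-, h2⟩
        exact hne (Fin.ext (by simp only [Fin.val_mk]; omega)))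
    · simp
  · rw [if_neg hP]
    apply Finset.sum_eq_zero
    rintro r -
    exact term_zero hc hc' r _ _ rfl rfl (by tauto)

end Lam


/-- A nilpotent square matrix over a field raised to the cardinality of its index type
vanishes. -/
lemma nilpotent_pow_card_eq_zero {n' : Type*} [Fintype n'] [DecidableEq n']
    {M : Matrix n' n' K} (h : IsNilpotent M) : M ^ (Fintype.card n') = 0 := by
  have h1 := Matrix.isNilpotent_charpoly_sub_pow_of_isNilpotent h
  have h2 : M.charpoly = X ^ Fintype.card n' := by
    have := h1.eq_zero
    rwa [sub_eq_zero] at this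
  have h3 := M.aeval_self_charpoly
  rwa [h2, map_pow, aeval_X] at h3

section Window

variable (hupos : ∀ h, 0 < u h) (w : ℕ)

/-- upper-triangular projection of the leading-coefficient matrix, restricted to the
window of blocks of sizes `w` or `w+1`. -/
def lamUp (A : Matrix (Σ h : Fin t, Fin (u h)) (Σ h : Fin t, Fin (u h)) K) :
    Matrix {k : Fin t // w ≤ u k ∧ u k ≤ w + 1} {k : Fin t // w ≤ u k ∧ u k ≤ w + 1} K :=
  fun k l => if u l.1 ≤ u k.1 then lam hupos A k.1 l.1 else 0

/-- lower-triangular projection of the leading-coefficient matrix. -/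
def lamLow (A : Matrix (Σ h : Fin t, Fin (u h)) (Σ h : Fin t, Fin (u h)) K) :
    Matrix {k : Fin t // w ≤ u k ∧ u k ≤ w + 1} {k : Fin t // w ≤ u k ∧ u k ≤ w + 1} K :=
  fun k l => if u k.1 ≤ u l.1 then lam hupos A k.1 l.1 else 0

variable {A A' : Matrix (Σ h : Fin t, Fin (u h)) (Σ h : Fin t, Fin (u h)) K}
  (hc : A * jordanMatrix u K = jordanMatrix u K * A)
  (hc' : A' * jordanMatrix u K = jordanMatrix u K * A')

include hc hc'

lemma lamUp_mul : lamUp hupos w (A * A') = lamUp hupos w A * lamUp hupos w A' := by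
  ext ⟨k, hk⟩ ⟨l, hl⟩
  rw [Matrix.mul_apply, lamUp]
  simp only
  have hsub : ∀ f : Fin t → K,
      (∑ c : {k : Fin t // w ≤ u k ∧ u k ≤ w + 1}, f c.1) =
        ∑ c ∈ Finset.univ.filter (fun c => w ≤ u c ∧ u c ≤ w + 1), f c := by
    intro f
    exact (Finset.sum_subtype _ (by simp) f).symm
  by_cases hkl : u l ≤ u k
  · rw [if_pos hkl, lam_mul hupos hc hc']
    have e1 : (∑ c : {k : Fin t // w ≤ u k ∧ u k ≤ w + 1},
        lamUp hupos w A ⟨k, hk⟩ c * lamUp hupos w A' c ⟨l, hl⟩) =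
      ∑ c ∈ Finset.univ.filter (fun c => w ≤ u c ∧ u c ≤ w + 1),
        (if u c ≤ u k then lam hupos A k c else 0) *
          (if u l ≤ u c then lam hupos A' c l else 0) :=
      hsub (fun c => (if u c ≤ u k then lam hupos A k c else 0) *
          (if u l ≤ u c then lam hupos A' c l else 0))
    rw [e1]
    rw [Finset.sum_filter, Finset.sum_filter]
    apply Finset.sum_congr rfl
    rintro c -
    by_cases hc1 : min (u k) (u l) ≤ u c ∧ u c ≤ max (u k) (u l)
    · rw [if_pos hc1, if_pos (by omega), if_pos (by omega), if_pos (by omega)]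
    · rw [if_neg hc1]
      by_cases hw : w ≤ u c ∧ u c ≤ w + 1
      · rw [if_pos hw]
        rcases Nat.lt_or_ge (u c) (u l) with h' | h'
        · rw [if_neg (show ¬ u l ≤ u c by omega), mul_zero]
        · rw [if_neg (show ¬ u c ≤ u k by omega), zero_mul]
      · rw [if_neg hw]
  · rw [if_neg hkl]
    symm
    apply Finset.sum_eq_zero
    rintro ⟨c, hc2⟩ -
    rw [lamUp, lamUp]
    simp only
    rcases Nat.lt_or_ge (u c) (u l) with h' | h'
    · rw [if_neg (show ¬ u l ≤ u c by omega), mul_zero]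
    · rw [if_neg (show ¬ u c ≤ u k by omega), zero_mul]

lemma lamLow_mul : lamLow hupos w (A * A') = lamLow hupos w A * lamLow hupos w A' := by
  ext ⟨k, hk⟩ ⟨l, hl⟩
  rw [Matrix.mul_apply, lamLow]
  simp only
  have hsub : ∀ f : Fin t → K,
      (∑ c : {k : Fin t // w ≤ u k ∧ u k ≤ w + 1}, f c.1) =
        ∑ c ∈ Finset.univ.filter (fun c => w ≤ u c ∧ u c ≤ w + 1), f c := by
    intro f
    exact (Finset.sum_subtype _ (by simp) f).symm
  by_cases hkl : u k ≤ u l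
  · rw [if_pos hkl, lam_mul hupos hc hc']
    have e1 : (∑ c : {k : Fin t // w ≤ u k ∧ u k ≤ w + 1},
        lamLow hupos w A ⟨k, hk⟩ c * lamLow hupos w A' c ⟨l, hl⟩) =
      ∑ c ∈ Finset.univ.filter (fun c => w ≤ u c ∧ u c ≤ w + 1),
        (if u k ≤ u c then lam hupos A k c else 0) *
          (if u c ≤ u l then lam hupos A' c l else 0) :=
      hsub (fun c => (if u k ≤ u c then lam hupos A k c else 0) *
          (if u c ≤ u l then lam hupos A' c l else 0))
    rw [e1]
    rw [Finset.sum_filter, Finset.sum_filter]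
    apply Finset.sum_congr rfl
    rintro c -
    by_cases hc1 : min (u k) (u l) ≤ u c ∧ u c ≤ max (u k) (u l)
    · rw [if_pos hc1, if_pos (by omega), if_pos (by omega), if_pos (by omega)]
    · rw [if_neg hc1]
      by_cases hw : w ≤ u c ∧ u c ≤ w + 1
      · rw [if_pos hw]
        rcases Nat.lt_or_ge (u c) (u k) with h' | h'
        · rw [if_neg (show ¬ u k ≤ u c by omega), zero_mul]
        · rw [if_neg (show ¬ u c ≤ u l by omega), mul_zero]
      · rw [if_neg hw]
  · rw [if_neg hkl]
    symm
    apply Finset.sum_eq_zero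
    rintro ⟨c, hc2⟩ -
    rw [lamLow, lamLow]
    simp only
    rcases Nat.lt_or_ge (u c) (u k) with h' | h'
    · rw [if_neg (show ¬ u k ≤ u c by omega), zero_mul]
    · rw [if_neg (show ¬ u c ≤ u l by omega), mul_zero]

end Window


section Vanish

variable (hupos : ∀ h, 0 < u h)
variable {A : Matrix (Σ h : Fin t, Fin (u h)) (Σ h : Fin t, Fin (u h)) K}
  (hc : A * jordanMatrix u K = jordanMatrix u K * A) (hA : IsNilpotent A)

include hc hA

/-- Key vanishing：for a nilpotent `A` commuting with the Jordan matrix, the leading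
coefficients of `A ^ s` vanish on pairs of blocks whose sizes differ by at most one. -/
lemma lam_pow_s_eq_zero {s : ℕ}
    (hs : ∀ c ∈ {c : ℕ | ∃ S : Finset (Fin t), S.card = c ∧
      ∀ i ∈ S, ∀ j ∈ S, u i ≤ u j + 1}, c ≤ s)
    {i0 j0 : Fin t} (hnear : u i0 ≤ u j0 + 1 ∧ u j0 ≤ u i0 + 1) :
    lam hupos (A ^ s) i0 j0 = 0 := by
  set w := min (u i0) (u j0) with hw
  have hpow_comm : ∀ n : ℕ, A ^ n * jordanMatrix u K = jordanMatrix u K * A ^ n :=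
    fun n => (Commute.pow_left hc n)
  have hmemi : w ≤ u i0 ∧ u i0 ≤ w + 1 := by omega
  have hmemj : w ≤ u j0 ∧ u j0 ≤ w + 1 := by omega
  have hW : Fintype.card {k : Fin t // w ≤ u k ∧ u k ≤ w + 1} ≤ s := by
    apply hs
    refine ⟨Finset.univ.filter (fun k => w ≤ u k ∧ u k ≤ w + 1),
      (Fintype.card_subtype _).symm, ?_⟩
    intro i hi j hj
    simp only [Finset.mem_filter, Finset.mem_univ, true_and] at hi hj
    omega
  have hcardpos : 0 < Fintype.card {k : Fin t // w ≤ u k ∧ u k ≤ w + 1} :=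
    Fintype.card_pos_iff.mpr ⟨⟨i0, hmemi⟩⟩
  have hs1 : 1 ≤ s := le_trans hcardpos hW
  obtain ⟨N, hN⟩ := hA
  have hN1 : A ^ (N + 1) = 0 := by rw [pow_succ, hN, zero_mul]
  rcases le_total (u j0) (u i0) with ho | ho
  · have hup : ∀ n : ℕ, lamUp hupos w (A ^ (n + 1)) = (lamUp hupos w A) ^ (n + 1) := by
      intro n
      induction n with
      | zero => simp [pow_one]
      | succ n ih =>
        rw [pow_succ, lamUp_mul hupos w (hpow_comm (n + 1)) hc, ih, ← pow_succ]
    have hupnil : IsNilpotent (lamUp hupos w A) := by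
      refine ⟨N + 1, ?_⟩
      rw [← hup N, hN1]
      ext k l
      simp [lamUp, lam]
    have h1 := nilpotent_pow_card_eq_zero hupnil
    have h2 : (lamUp hupos w A) ^ s = 0 := by
      rw [show s = Fintype.card {k : Fin t // w ≤ u k ∧ u k ≤ w + 1} +
        (s - Fintype.card {k : Fin t // w ≤ u k ∧ u k ≤ w + 1}) by omega, pow_add, h1,
        zero_mul]
    have h3 : lamUp hupos w (A ^ s) = 0 := by
      rw [show s = (s - 1) + 1 by omega, hup (s - 1), ← show s = (s - 1) + 1 by omega, h2]
    have h4 := congrFun (congrFun h3 ⟨i0, hmemi⟩) ⟨j0, hmemj⟩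
    rw [lamUp] at h4
    simp only [if_pos ho, Matrix.zero_apply] at h4
    exact h4
  · have hlow : ∀ n : ℕ, lamLow hupos w (A ^ (n + 1)) = (lamLow hupos w A) ^ (n + 1) := by
      intro n
      induction n with
      | zero => simp [pow_one]
      | succ n ih =>
        rw [pow_succ, lamLow_mul hupos w (hpow_comm (n + 1)) hc, ih, ← pow_succ]
    have hlownil : IsNilpotent (lamLow hupos w A) := by
      refine ⟨N + 1, ?_⟩
      rw [← hlow N, hN1]
      ext k l
      simp [lamLow, lam]
    have h1 := nilpotent_pow_card_eq_zero hlownil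
    have h2 : (lamLow hupos w A) ^ s = 0 := by
      rw [show s = Fintype.card {k : Fin t // w ≤ u k ∧ u k ≤ w + 1} +
        (s - Fintype.card {k : Fin t // w ≤ u k ∧ u k ≤ w + 1}) by omega, pow_add, h1,
        zero_mul]
    have h3 : lamLow hupos w (A ^ s) = 0 := by
      rw [show s = (s - 1) + 1 by omega, hlow (s - 1), ← show s = (s - 1) + 1 by omega, h2]
    have h4 := congrFun (congrFun h3 ⟨i0, hmemi⟩) ⟨j0, hmemj⟩
    rw [lamLow] at h4
    simp only [if_pos ho, Matrix.zero_apply] at h4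
    exact h4

end Vanish


section Weight

variable (hupos : ∀ h, 0 < u h)
variable {A : Matrix (Σ h : Fin t, Fin (u h)) (Σ h : Fin t, Fin (u h)) K}
  (hc : A * jordanMatrix u K = jordanMatrix u K * A) (hA : IsNilpotent A)
  {s : ℕ}
  (hs : ∀ c ∈ {c : ℕ | ∃ S : Finset (Fin t), S.card = c ∧
      ∀ i ∈ S, ∀ j ∈ S, u i ≤ u j + 1}, c ≤ s)
  (x : K)

include hupos hc hA hs

lemma weight_step {i j : Fin t} {p : Fin (u i)} {q : Fin (u j)}
    (hne : (jordanMatrix u K + x • A ^ s) ⟨i, p⟩ ⟨j, q⟩ ≠ 0) :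
    2 * (p : ℕ) + u j + 2 ≤ 2 * (q : ℕ) + u i := by
  by_contra hcon
  apply hne
  rw [Matrix.add_apply, Matrix.smul_apply, smul_eq_mul]
  have hcs : A ^ s * jordanMatrix u K = jordanMatrix u K * A ^ s := Commute.pow_left hc s
  have hB0 : jordanMatrix u K ⟨i, p⟩ ⟨j, q⟩ = 0 := by
    rw [jordan_apply, if_neg]
    rintro ⟨rfl, h2⟩
    omega
  have hA0 : (A ^ s) ⟨i, p⟩ ⟨j, q⟩ = 0 := by
    by_cases h1 : (q : ℕ) < p
    · exact support_lower hcs _ _ h1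
    by_cases h2 : (q : ℕ) + u i < u j + p
    · exact support_upper hcs _ _ h2
    have hnear : u i ≤ u j + 1 ∧ u j ≤ u i + 1 := by omega
    have h5 := lam_pow_s_eq_zero hupos hc hA hs hnear
    rw [lam] at h5
    rw [diag_const hcs _ _ (by omega)]
    exact (entry_congr _ rfl (by simp only [Fin.val_mk]; omega)).trans h5
  rw [hB0, hA0, mul_zero, add_zero]

lemma weight_pow : ∀ (m : ℕ) {i j : Fin t} (p : Fin (u i)) (q : Fin (u j)),
    ((jordanMatrix u K + x • A ^ s) ^ m) ⟨i, p⟩ ⟨j, q⟩ ≠ 0 →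
      2 * (p : ℕ) + u j + 2 * m ≤ 2 * (q : ℕ) + u i := by
  intro m
  induction m with
  | zero =>
    intro i j p q hne
    rw [pow_zero] at hne
    have heq : (⟨i, p⟩ : Σ h : Fin t, Fin (u h)) = ⟨j, q⟩ := by
      by_contra hne2
      exact hne (Matrix.one_apply_ne hne2)
    obtain ⟨rfl, h2⟩ := Sigma.mk.inj_iff.mp heq
    have := eq_of_heq h2
    subst this
    omega
  | succ m ih =>
    intro i j p q hne
    rw [pow_succ, Matrix.mul_apply] at hne
    obtain ⟨⟨k, r⟩, -, hz⟩ := Finset.exists_ne_zero_of_sum_ne_zero hne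
    have h1 := ih _ _ (left_ne_zero_of_mul hz)
    have h2 := weight_step hupos hc hA hs x (right_ne_zero_of_mul hz)
    omega

end Weight


section Rank

/-- subadditivity of matrix rank -/
lemma rank_add_le {n' : Type*} [Fintype n'] (P Q : Matrix n' n' K) :
    (P + Q).rank ≤ P.rank + Q.rank := by
  classical
  rw [Matrix.rank, Matrix.rank, Matrix.rank]
  have hle : LinearMap.range (P + Q).mulVecLin ≤
      LinearMap.range P.mulVecLin ⊔ LinearMap.range Q.mulVecLin := by
    rintro y ⟨v, rfl⟩
    rw [Matrix.mulVecLin_add, LinearMap.add_apply]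
    exact Submodule.add_mem_sup (LinearMap.mem_range_self _ v) (LinearMap.mem_range_self _ v)
  exact le_trans (Submodule.finrank_mono hle)
    (Submodule.finrank_add_le_finrank_add_finrank _ _)

variable {m' : ℕ}

lemma jordan_pow_apply (m : ℕ) (i j : Fin t) (p : Fin (u i)) (q : Fin (u j)) :
    ((jordanMatrix u K) ^ m) ⟨i, p⟩ ⟨j, q⟩ =
      if i = j ∧ (q : ℕ) = (p : ℕ) + m then 1 else 0 := by
  induction m generalizing j q with
  | zero =>
    rw [pow_zero]
    by_cases h : (⟨i, p⟩ : Σ h : Fin t, Fin (u h)) = ⟨j, q⟩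
    · obtain ⟨rfl, h2⟩ := Sigma.mk.inj_iff.mp h
      have := eq_of_heq h2
      subst this
      rw [Matrix.one_apply_eq, if_pos ⟨rfl, by omega⟩]
    · rw [Matrix.one_apply_ne h, if_neg]
      rintro ⟨rfl, h2⟩
      exact h (by simp only [Sigma.mk.inj_iff, heq_eq_eq, true_and]; exact Fin.ext (by omega))
  | succ m ih =>
    rw [pow_succ, mul_jordan_apply]
    split_ifs with h1 h2 h2
    · rw [ih, if_pos]
      obtain ⟨rfl, h3⟩ := h2
      exact ⟨rfl, by simp only [Fin.val_mk]; omega⟩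
    · rw [ih, if_neg]
      rintro ⟨rfl, h3⟩
      simp only [Fin.val_mk] at h3
      exact h2 ⟨rfl, by omega⟩
    · exfalso
      obtain ⟨rfl, h3⟩ := h2
      omega
    · rfl

/-- `B^m ⬝ (B^m)ᵀ` is the diagonal indicator matrix of `p + m < u i`. -/
lemma jordan_pow_mul_transpose (m : ℕ) :
    (jordanMatrix u K) ^ m * ((jordanMatrix u K) ^ m)ᵀ =
      Matrix.diagonal (fun z : Σ h : Fin t, Fin (u h) =>
        if (z.2 : ℕ) + m < u z.1 then (1 : K) else 0) := by
  ext ⟨i, p⟩ ⟨j, q⟩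
  rw [Matrix.mul_apply]
  by_cases hij : (⟨i, p⟩ : Σ h : Fin t, Fin (u h)) = ⟨j, q⟩
  · obtain ⟨rfl, h2⟩ := Sigma.mk.inj_iff.mp hij
    have := eq_of_heq h2
    subst this
    rw [Matrix.diagonal_apply_eq]
    by_cases hg : (p : ℕ) + m < u i
    · rw [if_pos hg, Finset.sum_eq_single (⟨i, ⟨(p : ℕ) + m, hg⟩⟩ : Σ h : Fin t, Fin (u h))]
      · rw [Matrix.transpose_apply, jordan_pow_apply,
          if_pos ⟨rfl, by simp only [Fin.val_mk]⟩, one_mul]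
      · rintro ⟨k, r⟩ - hne
        rw [jordan_pow_apply, if_neg, zero_mul]
        rintro ⟨rfl, h3⟩
        exact hne (by
          simp only [Sigma.mk.inj_iff, heq_eq_eq, true_and]
          exact Fin.ext (by simp only [Fin.val_mk]; omega))
      · simp
    · rw [if_neg hg, Finset.sum_eq_zero]
      rintro ⟨k, r⟩ -
      rw [jordan_pow_apply, if_neg, zero_mul]
      rintro ⟨rfl, h3⟩
      omega
  · rw [Matrix.diagonal_apply_ne _ hij, Finset.sum_eq_zero]
    rintro ⟨k, r⟩ -
    rw [Matrix.transpose_apply, jordan_pow_apply, jordan_pow_apply]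
    by_cases h1 : i = k ∧ (r : ℕ) = (p : ℕ) + m
    · rw [if_pos h1, if_neg, mul_zero]
      rintro ⟨rfl, h3⟩
      obtain ⟨rfl, h4⟩ := h1
      exact hij (by simp only [Sigma.mk.inj_iff, heq_eq_eq, true_and]; exact Fin.ext (by omega))
    · rw [if_neg h1, zero_mul]

end Rank


section Count

lemma rank_diag_indicator (c : (Σ h : Fin t, Fin (u h)) → Prop) [DecidablePred c] :
    (Matrix.diagonal fun z => if c z then (1 : K) else 0).rank =
      (Finset.univ.filter c).card := by
  classical
  rw [Matrix.rank_diagonal, Fintype.card_subtype]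
  congr 1
  apply Finset.filter_congr
  intro z _
  by_cases h : c z <;> simp [h]

lemma count_ineq (m : ℕ) :
    (Finset.univ.filter (fun z : Σ h : Fin t, Fin (u h) =>
      2 * (z.2 : ℕ) + m + 2 ≤ u z.1)).card +
    (Finset.univ.filter (fun z : Σ h : Fin t, Fin (u h) =>
      u z.1 + m ≤ 2 * (z.2 : ℕ) + 1)).card ≤
    (Finset.univ.filter (fun z : Σ h : Fin t, Fin (u h) => (z.2 : ℕ) + m < u z.1)).card := by
  classical
  set L := Finset.univ.filter (fun z : Σ h : Fin t, Fin (u h) =>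
    2 * (z.2 : ℕ) + m + 2 ≤ u z.1) with hL
  set H := Finset.univ.filter (fun z : Σ h : Fin t, Fin (u h) =>
    u z.1 + m ≤ 2 * (z.2 : ℕ) + 1) with hH
  set G := Finset.univ.filter (fun z : Σ h : Fin t, Fin (u h) =>
    (z.2 : ℕ) + m < u z.1) with hG
  have hmem : ∀ z : Σ h : Fin t, Fin (u h), z ∈ H → m ≤ (z.2 : ℕ) := by
    rintro ⟨j, q⟩ hz
    rw [hH, Finset.mem_filter] at hz
    have h2 : u j + m ≤ 2 * (q : ℕ) + 1 := hz.2
    have := q.isLt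
    omega
  set f : (Σ h : Fin t, Fin (u h)) → (Σ h : Fin t, Fin (u h)) :=
    fun z => ⟨z.1, ⟨(z.2 : ℕ) - m, by have := z.2.isLt; omega⟩⟩ with hf
  have himg : H.image f ⊆ G := by
    intro y hy
    rw [Finset.mem_image] at hy
    obtain ⟨⟨j, q⟩, hz, rfl⟩ := hy
    have h1 : m ≤ (q : ℕ) := hmem _ hz
    rw [hG, Finset.mem_filter]
    have := q.isLt
    refine ⟨Finset.mem_univ _, ?_⟩
    show ((⟨(q : ℕ) - m, _⟩ : Fin (u j)) : ℕ) + m < u j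
    simp only [Fin.val_mk]
    omega
  have hLG : L ⊆ G := by
    rintro ⟨i, p⟩ hz
    rw [hL, Finset.mem_filter] at hz
    have h2 : 2 * (p : ℕ) + m + 2 ≤ u i := hz.2
    rw [hG, Finset.mem_filter]
    exact ⟨Finset.mem_univ _, show (p : ℕ) + m < u i by omega⟩
  have hcard : (H.image f).card = H.card := by
    apply Finset.card_image_of_injOn
    rintro ⟨j, q⟩ hz ⟨j', q'⟩ hz' hEq
    have h1 : m ≤ (q : ℕ) := hmem _ hz
    have h2 : m ≤ (q' : ℕ) := hmem _ hz'
    obtain ⟨rfl, h3⟩ := Sigma.mk.inj_iff.mp hEq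
    have h4 : (q : ℕ) - m = (q' : ℕ) - m := by
      have := congrArg Fin.val (eq_of_heq h3)
      simpa using this
    simp only [Sigma.mk.inj_iff, heq_eq_eq, true_and]
    exact Fin.ext (by omega)
  have hdisj : Disjoint L (H.image f) := by
    rw [Finset.disjoint_left]
    rintro ⟨i, p⟩ hz hz'
    rw [hL, Finset.mem_filter] at hz
    have h5 : 2 * (p : ℕ) + m + 2 ≤ u i := hz.2
    rw [Finset.mem_image] at hz'
    obtain ⟨⟨j, q⟩, hq, hEq⟩ := hz'
    have h1 : m ≤ (q : ℕ) := hmem _ hq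
    have h6 : u j + m ≤ 2 * (q : ℕ) + 1 := (Finset.mem_filter.mp hq).2
    have hEq' : (⟨j, ⟨(q : ℕ) - m, by have := q.isLt; omega⟩⟩ : Σ h : Fin t, Fin (u h)) =
      ⟨i, p⟩ := hEq
    obtain ⟨rfl, h3⟩ := Sigma.mk.inj_iff.mp hEq'
    have h4 : (q : ℕ) - m = (p : ℕ) := by
      have := congrArg Fin.val (eq_of_heq h3)
      simpa using this
    omega
  calc L.card + H.card = L.card + (H.image f).card := by rw [hcard]
    _ = (L ∪ H.image f).card := (Finset.card_union_of_disjoint hdisj).symm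
    _ ≤ G.card := Finset.card_le_card (Finset.union_subset hLG himg)

end Count

end RankPerturbAux

open RankPerturbAux

/-- Let `B` be the nilpotent matrix in Jordan form with block sizes
`u 1 ≥ … ≥ u t > 0` over an algebraically closed field `K`, and let `A` be a
nilpotent matrix commuting with `B`.  Let `s` be the maximal cardinality of a
set of Jordan blocks of `B` whose sizes pairwise differ by at most `1`.
Then for every positive integer `m` and every scalar `x ∈ K`,
`rank ((B + x • A ^ s) ^ m) ≤ rank (B ^ m)`. -/
theorem rank_perturbed_pow_le_rank_pow (K : Type*) [Field K] [IsAlgClosed K]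
    (t : ℕ) (u : Fin t → ℕ) (hu : Antitone u) (hupos : ∀ h, 0 < u h)
    (A : Matrix (Σ h : Fin t, Fin (u h)) (Σ h : Fin t, Fin (u h)) K)
    (hA : IsNilpotent A)
    (hcomm : A * jordanMatrix u K = jordanMatrix u K * A)
    (s : ℕ)
    (hs : IsGreatest {c : ℕ | ∃ S : Finset (Fin t), S.card = c ∧
      ∀ i ∈ S, ∀ j ∈ S, u i ≤ u j + 1} s)
    (m : ℕ) (hm : 0 < m) (x : K) :
    ((jordanMatrix u K + x • A ^ s) ^ m).rank ≤ ((jordanMatrix u K) ^ m).rank := by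
  classical
  have hs2 : ∀ c ∈ {c : ℕ | ∃ S : Finset (Fin t), S.card = c ∧
      ∀ i ∈ S, ∀ j ∈ S, u i ≤ u j + 1}, c ≤ s := fun c hc => hs.2 hc
  have hd : Matrix.diagonal (fun z : Σ h : Fin t, Fin (u h) =>
        if 2 * (z.2 : ℕ) + 2 ≤ u z.1 + m then (1 : K) else 0) +
      Matrix.diagonal (fun z : Σ h : Fin t, Fin (u h) =>
        if u z.1 + m ≤ 2 * (z.2 : ℕ) + 1 then (1 : K) else 0) = 1 := by
    rw [Matrix.diagonal_add, ← Matrix.diagonal_one]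
    apply congrArg Matrix.diagonal
    funext z
    show (if 2 * (z.2 : ℕ) + 2 ≤ u z.1 + m then (1 : K) else 0) +
      (if u z.1 + m ≤ 2 * (z.2 : ℕ) + 1 then (1 : K) else 0) = 1
    by_cases h : 2 * (z.2 : ℕ) + 2 ≤ u z.1 + m
    · rw [if_pos h, if_neg (by omega), add_zero]
    · rw [if_neg h, if_pos (by omega), zero_add]
  have hsplit : (jordanMatrix u K + x • A ^ s) ^ m =
      (jordanMatrix u K + x • A ^ s) ^ m * Matrix.diagonal (fun z : Σ h : Fin t, Fin (u h) =>
        if 2 * (z.2 : ℕ) + 2 ≤ u z.1 + m then (1 : K) else 0) +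
      (jordanMatrix u K + x • A ^ s) ^ m * Matrix.diagonal (fun z : Σ h : Fin t, Fin (u h) =>
        if u z.1 + m ≤ 2 * (z.2 : ℕ) + 1 then (1 : K) else 0) := by
    rw [← mul_add, hd, mul_one]
  have hb2 : ((jordanMatrix u K + x • A ^ s) ^ m * Matrix.diagonal
        (fun z : Σ h : Fin t, Fin (u h) =>
          if u z.1 + m ≤ 2 * (z.2 : ℕ) + 1 then (1 : K) else 0)).rank ≤
      (Finset.univ.filter (fun z : Σ h : Fin t, Fin (u h) =>
        u z.1 + m ≤ 2 * (z.2 : ℕ) + 1)).card := by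
    refine le_trans (Matrix.rank_mul_le_right _ _) ?_
    rw [rank_diag_indicator]
  have hrow : Matrix.diagonal (fun z : Σ h : Fin t, Fin (u h) =>
        if 2 * (z.2 : ℕ) + m + 2 ≤ u z.1 then (1 : K) else 0) *
        ((jordanMatrix u K + x • A ^ s) ^ m * Matrix.diagonal
          (fun z : Σ h : Fin t, Fin (u h) =>
            if 2 * (z.2 : ℕ) + 2 ≤ u z.1 + m then (1 : K) else 0)) =
      (jordanMatrix u K + x • A ^ s) ^ m * Matrix.diagonal
        (fun z : Σ h : Fin t, Fin (u h) =>
          if 2 * (z.2 : ℕ) + 2 ≤ u z.1 + m then (1 : K) else 0) := by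
    ext ⟨i, p⟩ ⟨j, q⟩
    rw [Matrix.diagonal_mul, Matrix.mul_diagonal]
    show (if 2 * (p : ℕ) + m + 2 ≤ u i then (1 : K) else 0) *
        (((jordanMatrix u K + x • A ^ s) ^ m) ⟨i, p⟩ ⟨j, q⟩ *
          (if 2 * (q : ℕ) + 2 ≤ u j + m then (1 : K) else 0)) =
      ((jordanMatrix u K + x • A ^ s) ^ m) ⟨i, p⟩ ⟨j, q⟩ *
        (if 2 * (q : ℕ) + 2 ≤ u j + m then (1 : K) else 0)
    by_cases h1 : 2 * (p : ℕ) + m + 2 ≤ u i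
    · rw [if_pos h1, one_mul]
    · by_cases h2 : ((jordanMatrix u K + x • A ^ s) ^ m) ⟨i, p⟩ ⟨j, q⟩ = 0
      · rw [h2, zero_mul, mul_zero]
      · by_cases h3 : 2 * (q : ℕ) + 2 ≤ u j + m
        · exfalso
          have h4 := weight_pow hupos hcomm hA hs2 x m p q h2
          omega
        · rw [if_neg h3, mul_zero, mul_zero]
  have hb1 : ((jordanMatrix u K + x • A ^ s) ^ m * Matrix.diagonal
        (fun z : Σ h : Fin t, Fin (u h) =>
          if 2 * (z.2 : ℕ) + 2 ≤ u z.1 + m then (1 : K) else 0)).rank ≤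
      (Finset.univ.filter (fun z : Σ h : Fin t, Fin (u h) =>
        2 * (z.2 : ℕ) + m + 2 ≤ u z.1)).card := by
    calc ((jordanMatrix u K + x • A ^ s) ^ m * Matrix.diagonal
          (fun z : Σ h : Fin t, Fin (u h) =>
            if 2 * (z.2 : ℕ) + 2 ≤ u z.1 + m then (1 : K) else 0)).rank
        = (Matrix.diagonal (fun z : Σ h : Fin t, Fin (u h) =>
            if 2 * (z.2 : ℕ) + m + 2 ≤ u z.1 then (1 : K) else 0) *
          ((jordanMatrix u K + x • A ^ s) ^ m * Matrix.diagonal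
            (fun z : Σ h : Fin t, Fin (u h) =>
              if 2 * (z.2 : ℕ) + 2 ≤ u z.1 + m then (1 : K) else 0))).rank := by rw [hrow]
      _ ≤ (Matrix.diagonal (fun z : Σ h : Fin t, Fin (u h) =>
            if 2 * (z.2 : ℕ) + m + 2 ≤ u z.1 then (1 : K) else 0)).rank :=
          Matrix.rank_mul_le_left _ _
      _ = _ := rank_diag_indicator _
  have hlower : (Finset.univ.filter (fun z : Σ h : Fin t, Fin (u h) =>
        (z.2 : ℕ) + m < u z.1)).card ≤ ((jordanMatrix u K) ^ m).rank := by
    calc (Finset.univ.filter (fun z : Σ h : Fin t, Fin (u h) =>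
          (z.2 : ℕ) + m < u z.1)).card
        = (Matrix.diagonal (fun z : Σ h : Fin t, Fin (u h) =>
            if (z.2 : ℕ) + m < u z.1 then (1 : K) else 0)).rank :=
          (rank_diag_indicator _).symm
      _ = ((jordanMatrix u K) ^ m * Matrix.transpose ((jordanMatrix u K) ^ m)).rank := by
          rw [jordan_pow_mul_transpose]
      _ ≤ ((jordanMatrix u K) ^ m).rank := Matrix.rank_mul_le_left _ _
  calc ((jordanMatrix u K + x • A ^ s) ^ m).rank
      = ((jordanMatrix u K + x • A ^ s) ^ m * Matrix.diagonal
          (fun z : Σ h : Fin t, Fin (u h) =>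
            if 2 * (z.2 : ℕ) + 2 ≤ u z.1 + m then (1 : K) else 0) +
        (jordanMatrix u K + x • A ^ s) ^ m * Matrix.diagonal
          (fun z : Σ h : Fin t, Fin (u h) =>
            if u z.1 + m ≤ 2 * (z.2 : ℕ) + 1 then (1 : K) else 0)).rank := by rw [← hsplit]
    _ ≤ _ + _ := rank_add_le _ _
    _ ≤ (Finset.univ.filter (fun z : Σ h : Fin t, Fin (u h) =>
          2 * (z.2 : ℕ) + m + 2 ≤ u z.1)).card +
        (Finset.univ.filter (fun z : Σ h : Fin t, Fin (u h) =>
          u z.1 + m ≤ 2 * (z.2 : ℕ) + 1)).card := add_le_add hb1 hb2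
    _ ≤ (Finset.univ.filter (fun z : Σ h : Fin t, Fin (u h) =>
          (z.2 : ℕ) + m < u z.1)).card := count_ineq m
    _ ≤ ((jordanMatrix u K) ^ m).rank := hlower
end

section
/- Let B be nilpotent in Jordan form with block sizes u₁ ≥ … ≥ u_t, let A be nilpotent commuting with B, and suppose the blocks A_{ij} of A satisfy rank A_{ij} ≤ min{u_i,u_j} − 1 whenever |u_i − u_j| ≤ 1. Then for all i, j and m ≥ 1, rank((A^m)_{ij}) ≤ min{u_i,u_j} − m + h(min{i,j}, max{i,j}), where h(i,j) is the number of jumps of size ≥ 2 in the block sizes between positions i and j (h(i,j) = 0 if u_i − u_j ≤ 1). -/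
/-- The `(i, j)` block of a matrix written in the block form determined by the
Jordan structure: an `u i × u j` matrix. -/
def matrixBlock {t : ℕ} {u : Fin t → ℕ} {K : Type*} [Field K]
    (A : Matrix (Σ h : Fin t, Fin (u h)) (Σ h : Fin t, Fin (u h)) K)
    (i j : Fin t) : Matrix (Fin (u i)) (Fin (u j)) K :=
  fun a b => A ⟨i, a⟩ ⟨j, b⟩

/-!
A matrix commuting with the nilpotent Jordan matrix is, blockwise, an upper triangular Toeplitz
matrix: the entry `(a, b)` of block `(i, j)` depends only on `b - a` and vanishes when
`b < a + (u j - u i)`. In a block with `|u i - u j| ≤ 1` the rank hypothesis also kills the first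
admissible diagonal `b = a + (u j - u i)`, because a nonzero value there makes the block
triangular of full rank `min (u i) (u j)`; in the other blocks `h ≥ 1`. Hence the entries of `A`
vanish for `b - a < 1 + d i j`, where `d i j = (u j - u i)₊ - h (min i j) (max i j)`
(`jumpDefect`).
Since the chains defining `h` are the greedy ones, `d` satisfies the triangle inequality, so
these vanishing profiles add up under multiplication: `A ^ m` vanishes for `b - a < m + d i j`,
which leaves at most `u j - m - d i j = min (u i) (u j) - m + h` nonzero columns in each block.
-/

section JumpChain

variable {t : ℕ} {u : Fin t → ℕ}

structure IsJumpStep (u : Fin t → ℕ) (p n : Fin t) : Prop where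
  lt : p < n
  drop : u n + 2 ≤ u p
  flat : ∀ k, p ≤ k → k < n → u p ≤ u k + 1

lemma IsJumpStep.le_of_add_two_le {p n k : Fin t} (h : IsJumpStep u p n) (hpk : p ≤ k)
    (hk : u k + 2 ≤ u p) : n ≤ k := by
  by_contra! hkn
  have := h.flat k hpk hkn
  omega

lemma IsJumpStep.unique {p n n' : Fin t} (h : IsJumpStep u p n) (h' : IsJumpStep u p n') :
    n = n' :=
  le_antisymm (h.le_of_add_two_le h'.lt.le h'.drop) (h'.le_of_add_two_le h.lt.le h.drop)

-- `JumpChain u v p L`: a chain `p = k₀ < k₁ < … < k_L` as in the definition of `h`,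
-- ending with `v ≤ u k_L ≤ v + 1`.
inductive JumpChain (u : Fin t → ℕ) (v : ℕ) : Fin t → ℕ → Prop
  | last {p : Fin t} : v ≤ u p → u p ≤ v + 1 → JumpChain u v p 0
  | step {p n : Fin t} {L : ℕ} : IsJumpStep u p n → JumpChain u v n L → JumpChain u v p (L + 1)

lemma JumpChain.le_apply {v : ℕ} {p : Fin t} {L : ℕ} (h : JumpChain u v p L) : v ≤ u p := by
  induction h with
  | last hv _ => exact hv
  | step hpn _ ih => have := hpn.drop; omega

lemma JumpChain.unique {v : ℕ} {p : Fin t} {L L' : ℕ} (h : JumpChain u v p L)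
    (h' : JumpChain u v p L') : L = L' := by
  induction h generalizing L' with
  | last _ hp =>
    cases h' with
    | last => rfl
    | step hpn hn => have := hpn.drop; have := hn.le_apply; omega
  | step hpn hn ih =>
    cases h' with
    | last _ hp => have := hpn.drop; have := hn.le_apply; omega
    | step hpn' hn' => rw [ih (hpn.unique hpn' ▸ hn')]

lemma JumpChain.eq_zero {v : ℕ} {p : Fin t} {L : ℕ} (h : JumpChain u v p L)
    (hp : u p ≤ v + 1) : L = 0 := by
  cases h with
  | last => rfl
  | step hpn hn => have := hpn.drop; have := hn.le_apply; omega

lemma JumpChain.exists_step {v : ℕ} {p : Fin t} {L : ℕ} (h : JumpChain u v p L)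
    (hp : v + 2 ≤ u p) : ∃ n L', IsJumpStep u p n ∧ JumpChain u v n L' ∧ L = L' + 1 := by
  cases h with
  | last _ hp' => omega
  | step hpn hn => exact ⟨_, _, hpn, hn, rfl⟩

lemma JumpChain.of_strictMono {v L : ℕ} (c : Fin (L + 1) → Fin t) (hc : StrictMono c)
    (hstep : ∀ l l' : Fin (L + 1), (l : ℕ) + 1 = l' →
      u (c l') + 2 ≤ u (c l) ∧ ∀ k, c l ≤ k → k < c l' → u (c l) ≤ u k + 1)
    (hv : v ≤ u (c (Fin.last L))) (hv' : u (c (Fin.last L)) ≤ v + 1) :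
    JumpChain u v (c 0) L := by
  induction L with
  | zero => exact .last hv hv'
  | succ L ih =>
    refine .step (n := c (Fin.succ 0))
      ⟨hc (Fin.succ_pos 0), (hstep 0 _ rfl).1, (hstep 0 _ rfl).2⟩ ?_
    exact ih (c ∘ Fin.succ) (hc.comp (Fin.strictMono_succ))
      (fun l l' hl => hstep l.succ l'.succ (by simp [hl])) hv hv'

def IsJumpCount (u : Fin t → ℕ) (H : Fin t → Fin t → ℕ) : Prop :=
  ∀ i j, i ≤ j → JumpChain u (u j) i (H i j)

lemma isJumpCount_of_chain {H : Fin t → Fin t → ℕ} (hu : Antitone u)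
    (hzero : ∀ i j : Fin t, i ≤ j → u i ≤ u j + 1 → H i j = 0)
    (hchain : ∀ i j : Fin t, i ≤ j → u j + 2 ≤ u i →
      ∃ c : Fin (H i j + 1) → Fin t, StrictMono c ∧ c 0 = i ∧
        (∀ l l' : Fin (H i j + 1), (l : ℕ) + 1 = (l' : ℕ) →
          u (c l') + 2 ≤ u (c l) ∧
          ∀ k : Fin t, c l ≤ k → k < c l' → u (c l) ≤ u k + 1) ∧
        u j ≤ u (c (Fin.last (H i j))) ∧
        u (c (Fin.last (H i j))) ≤ u j + 1) :
    IsJumpCount u H := by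
  intro i j hij
  by_cases hi : u i ≤ u j + 1
  · rw [hzero i j hij hi]
    exact .last (hu hij) hi
  obtain ⟨c, hc, hc0, hstep, hv, hv'⟩ := hchain i j hij (by omega)
  have := JumpChain.of_strictMono c hc hstep hv hv'
  rwa [hc0] at this

namespace IsJumpCount

variable {H : Fin t → Fin t → ℕ} (hH : IsJumpCount u H)
include hH

lemma eq_zero {i j : Fin t} (hij : i ≤ j) (hi : u i ≤ u j + 1) : H i j = 0 :=
  (hH i j hij).eq_zero hi

lemma exists_eq_succ {i j : Fin t} (hij : i ≤ j) (hji : u j + 2 ≤ u i) :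
    ∃ n, IsJumpStep u i n ∧ n ≤ j ∧ H i j = H n j + 1 := by
  obtain ⟨n, L, hin, hn, hL⟩ := (hH i j hij).exists_step hji
  have hnj := hin.le_of_add_two_le hij hji
  exact ⟨n, hin, hnj, hL.trans (by rw [hn.unique (hH n j hnj)])⟩

lemma le_add_one_of_eq_zero {i j : Fin t} (hij : i ≤ j) (h0 : H i j = 0) : u i ≤ u j + 1 := by
  by_contra! hji
  obtain ⟨_, -, -, hsucc⟩ := hH.exists_eq_succ hij hji
  omega

variable (hu : Antitone u)
include hu

lemma le_of_apply_le {p q j : Fin t} (hpj : p ≤ j) (hqj : q ≤ j) (hqp : u q ≤ u p) :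
    H q j ≤ H p j := by
  induction p using WellFoundedGT.induction generalizing q with
  | ind p ih =>
    by_cases hq : u q ≤ u j + 1
    · simp [hH.eq_zero hqj hq]
    obtain ⟨nq, hqnq, hnqj, hHq⟩ := hH.exists_eq_succ hqj (by omega)
    obtain ⟨np, hpnp, hnpj, hHp⟩ := hH.exists_eq_succ hpj (by omega)
    have := hqnq.drop
    have hpnq : p < nq := lt_of_not_ge fun h => by have := hu h; omega
    have := ih np hpnp.lt hnpj hnqj (hu (hpnp.le_of_add_two_le hpnq.le (by omega)))
    omega

lemma two_mul_add_le {p j : Fin t} (hpj : p ≤ j) : 2 * H p j + u j ≤ u p := by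
  induction p using WellFoundedGT.induction with
  | ind p ih =>
    by_cases hp : u p ≤ u j + 1
    · simp [hH.eq_zero hpj hp, hu hpj]
    obtain ⟨n, hpn, hnj, hHp⟩ := hH.exists_eq_succ hpj (by omega)
    have := ih n hpn.lt hnj
    have := hpn.drop
    omega

lemma add_le {i k j : Fin t} (hik : i ≤ k) (hkj : k ≤ j) : H i k + H k j ≤ H i j := by
  induction i using WellFoundedGT.induction with
  | ind i ih =>
    by_cases hi : u i ≤ u k + 1
    · simpa [hH.eq_zero hik hi] using hH.le_of_apply_le hu (hik.trans hkj) hkj (hu hik)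
    obtain ⟨n, hin, hnk, hHik⟩ := hH.exists_eq_succ hik (by omega)
    obtain ⟨n', hin', -, hHij⟩ := hH.exists_eq_succ (hik.trans hkj) (by have := hu hkj; omega)
    obtain rfl := hin.unique hin'
    have := ih n hin.lt hnk
    omega

lemma add_add_le_of_common_end {i j k : Fin t} (hij : i ≤ j) (hjk : j ≤ k) :
    H i k + H j k + u k ≤ H i j + u j := by
  induction i using WellFoundedGT.induction with
  | ind i ih =>
    by_cases hi : u i ≤ u j + 1
    · have := hH.two_mul_add_le hu (hij.trans hjk)
      have := hH.two_mul_add_le hu hjk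
      have := hH.eq_zero hij hi
      omega
    obtain ⟨n, hin, hnj, hHij⟩ := hH.exists_eq_succ hij (by omega)
    obtain ⟨n', hin', -, hHik⟩ := hH.exists_eq_succ (hij.trans hjk) (by have := hu hjk; omega)
    obtain rfl := hin.unique hin'
    have := ih n hin.lt hnj
    omega

lemma add_add_le_of_common_start {k i j : Fin t} (hki : k ≤ i) (hij : i ≤ j) :
    H k i + H k j + u i ≤ H i j + u k := by
  induction k using WellFoundedGT.induction with
  | ind k ih =>
    have hui := hu hki
    by_cases hk : u k ≤ u i + 1
    · rw [hH.eq_zero hki hk]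
      by_cases hkj : u k ≤ u j + 1
      · rw [hH.eq_zero (hki.trans hij) hkj]
        omega
      obtain ⟨n, hkn, hnj, hHkj⟩ := hH.exists_eq_succ (hki.trans hij) (by omega)
      have := hkn.drop
      by_cases hik : u k ≤ u i
      · have := hH.le_of_apply_le hu hij (hki.trans hij) hik
        omega
      · have := hH.le_of_apply_le hu hij hnj (by omega)
        omega
    obtain ⟨n, hkn, hni, hHki⟩ := hH.exists_eq_succ hki (by omega)
    obtain ⟨n', hkn', -, hHkj⟩ := hH.exists_eq_succ (hki.trans hij) (by have := hu hij; omega)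
    obtain rfl := hkn.unique hkn'
    have := ih n hkn.lt hni
    have := hkn.drop
    omega

end IsJumpCount

end JumpChain

section JumpDefect

variable {t : ℕ} {u : Fin t → ℕ} {H : Fin t → Fin t → ℕ}

def jumpDefect (u : Fin t → ℕ) (H : Fin t → Fin t → ℕ) (i j : Fin t) : ℤ :=
  ((u j - u i : ℕ) : ℤ) - H (min i j) (max i j)

lemma jumpDefect_of_le (hu : Antitone u) {i j : Fin t} (hij : i ≤ j) :
    jumpDefect u H i j = -H i j := by
  simp [jumpDefect, min_eq_left hij, max_eq_right hij, Nat.sub_eq_zero_of_le (hu hij)]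

lemma jumpDefect_of_ge (hu : Antitone u) {i j : Fin t} (hji : j ≤ i) :
    jumpDefect u H i j = u j - u i - H j i := by
  simp [jumpDefect, min_eq_right hji, max_eq_left hji, Nat.cast_sub (hu hji)]

lemma jumpDefect_swap (i j : Fin t) :
    jumpDefect u H j i = jumpDefect u H i j + u i - u j := by
  simp only [jumpDefect, min_comm j i, max_comm j i]
  omega

lemma IsJumpCount.jumpDefect_le_add (hH : IsJumpCount u H) (hu : Antitone u) (i k j : Fin t) :
    jumpDefect u H i j ≤ jumpDefect u H i k + jumpDefect u H k j := by
  wlog hij : i ≤ j generalizing i j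
  · linarith [this j i (le_of_not_ge hij), jumpDefect_swap (u := u) (H := H) i j,
      jumpDefect_swap (u := u) (H := H) k j, jumpDefect_swap (u := u) (H := H) i k]
  rw [jumpDefect_of_le hu hij]
  rcases le_total k i with hki | hik
  · rw [jumpDefect_of_ge hu hki, jumpDefect_of_le hu (hki.trans hij)]
    have := hH.add_add_le_of_common_start hu hki hij
    omega
  rcases le_total k j with hkj | hjk
  · rw [jumpDefect_of_le hu hik, jumpDefect_of_le hu hkj]
    have := hH.add_le hu hik hkj
    omega
  · rw [jumpDefect_of_le hu (hij.trans hjk), jumpDefect_of_ge hu hjk]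
    have := hH.add_add_le_of_common_end hu hij hjk
    omega

end JumpDefect

section EntriesVanishBelow

variable {R : Type*} [Semiring R] {ι : Type*} [Fintype ι] {n : ι → ℕ}

def EntriesVanishBelow (A : Matrix (Σ h : ι, Fin (n h)) (Σ h : ι, Fin (n h)) R)
    (w : ι → ι → ℤ) : Prop :=
  ∀ i j (a : Fin (n i)) (b : Fin (n j)), (b : ℤ) < a + w i j → A ⟨i, a⟩ ⟨j, b⟩ = 0

lemma EntriesVanishBelow.mul {A B : Matrix (Σ h : ι, Fin (n h)) (Σ h : ι, Fin (n h)) R}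
    {w w' w'' : ι → ι → ℤ} (hA : EntriesVanishBelow A w) (hB : EntriesVanishBelow B w')
    (hw : ∀ i k j, w'' i j ≤ w i k + w' k j) : EntriesVanishBelow (A * B) w'' := by
  intro i j a b hab
  rw [Matrix.mul_apply]
  refine Finset.sum_eq_zero fun ⟨k, c⟩ _ => ?_
  by_cases hac : (c : ℤ) < a + w i k
  · rw [hA i k a c hac, zero_mul]
  · rw [hB k j c b (by linarith [hw i k j]), mul_zero]

lemma EntriesVanishBelow.pow [DecidableEq ι]
    {A : Matrix (Σ h : ι, Fin (n h)) (Σ h : ι, Fin (n h)) R} {d : ι → ι → ℤ}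
    (hA : EntriesVanishBelow A fun i j => 1 + d i j)
    (hd : ∀ i k j, d i j ≤ d i k + d k j) (m : ℕ) :
    EntriesVanishBelow (A ^ (m + 1)) fun i j => (m + 1 : ℕ) + d i j := by
  induction m with
  | zero => simpa using hA
  | succ m ih =>
    rw [pow_succ]
    exact ih.mul hA fun i k j => by push_cast; linarith [hd i k j]

end EntriesVanishBelow

open Finset in
lemma Matrix.rank_le_sub_of_cols_eq_zero {K : Type*} [Field K] {m : Type*} [Fintype m] {n : ℕ}
    (A : Matrix m (Fin n) K) (r : ℕ) (hA : ∀ a (b : Fin n), (b : ℕ) < r → A a b = 0) :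
    A.rank ≤ n - r := by
  classical
  have hcard : #{b : Fin n | ¬ (b : ℕ) < r} = n - r := by
    have := card_filter_add_card_filter_not (s := univ) (fun b : Fin n => (b : ℕ) < r)
    rw [Fin.card_filter_val_lt, card_univ, Fintype.card_fin] at this
    omega
  rw [← hcard, ← Matrix.rank_transpose]
  refine Matrix.rank_le_card_of_support_subset _ _ fun b hb => ?_
  by_contra hbr
  exact hb (funext fun a => hA a b (by simpa using hbr))

lemma EntriesVanishBelow.rank_matrixBlock_le {K : Type*} [Field K] {t : ℕ} {u : Fin t → ℕ}
    {A : Matrix (Σ h : Fin t, Fin (u h)) (Σ h : Fin t, Fin (u h)) K} {w : Fin t → Fin t → ℤ}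
    (hA : EntriesVanishBelow A w) (i j : Fin t) :
    (matrixBlock A i j).rank ≤ u j - (w i j).toNat :=
  Matrix.rank_le_sub_of_cols_eq_zero _ _ fun a b hb => hA i j a b (by omega)

section JordanCommutant

variable {K : Type*} [Field K] {t : ℕ} {u : Fin t → ℕ}
  (M : Matrix (Σ h : Fin t, Fin (u h)) (Σ h : Fin t, Fin (u h)) K)

lemma mul_jordanMatrix_apply_succ (x : Σ h : Fin t, Fin (u h)) (k : Fin t) (b : ℕ)
    (hb : b + 1 < u k) :
    (M * jordanMatrix u K) x ⟨k, ⟨b + 1, hb⟩⟩ = M x ⟨k, ⟨b, by omega⟩⟩ := by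
  rw [Matrix.mul_apply, Fintype.sum_eq_single ⟨k, ⟨b, by omega⟩⟩]
  · simp [jordanMatrix]
  · rintro ⟨k', b'⟩ hne
    simp only [jordanMatrix, mul_ite, mul_one, mul_zero, ite_eq_right_iff, and_imp]
    rintro rfl hb'
    exact (hne (Sigma.ext rfl (heq_of_eq (Fin.ext (by simp_all))))).elim

lemma mul_jordanMatrix_apply_zero (x : Σ h : Fin t, Fin (u h)) (k : Fin t) (hk : 0 < u k) :
    (M * jordanMatrix u K) x ⟨k, ⟨0, hk⟩⟩ = 0 := by
  simp [Matrix.mul_apply, jordanMatrix]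

lemma jordanMatrix_mul_apply_of_succ_lt (h : Fin t) (a : ℕ) (ha : a + 1 < u h)
    (y : Σ h : Fin t, Fin (u h)) :
    (jordanMatrix u K * M) ⟨h, ⟨a, by omega⟩⟩ y = M ⟨h, ⟨a + 1, ha⟩⟩ y := by
  rw [Matrix.mul_apply, Fintype.sum_eq_single ⟨h, ⟨a + 1, ha⟩⟩]
  · simp [jordanMatrix]
  · rintro ⟨h', a'⟩ hne
    simp only [jordanMatrix, ite_mul, one_mul, zero_mul, ite_eq_right_iff, and_imp]
    rintro rfl ha'
    exact (hne (Sigma.ext rfl (heq_of_eq (Fin.ext (by simp_all))))).elim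

lemma jordanMatrix_mul_apply_of_succ_eq (h : Fin t) (a : ℕ) (ha : a + 1 = u h)
    (y : Σ h : Fin t, Fin (u h)) :
    (jordanMatrix u K * M) ⟨h, ⟨a, by omega⟩⟩ y = 0 := by
  refine Finset.sum_eq_zero fun ⟨k, c⟩ _ => ?_
  simp only [jordanMatrix, ite_mul, one_mul, zero_mul, ite_eq_right_iff, and_imp]
  rintro rfl hc
  have := c.isLt
  omega

variable {M} (hM : Commute M (jordanMatrix u K))
include hM

lemma commute_jordanMatrix_apply_succ (h k : Fin t) (a b : ℕ) (ha : a + 1 < u h)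
    (hb : b + 1 < u k) :
    M ⟨h, ⟨a + 1, ha⟩⟩ ⟨k, ⟨b + 1, hb⟩⟩ = M ⟨h, ⟨a, by omega⟩⟩ ⟨k, ⟨b, by omega⟩⟩ := by
  have e := congrFun (congrFun hM ⟨h, ⟨a, by omega⟩⟩) ⟨k, ⟨b + 1, hb⟩⟩
  rwa [mul_jordanMatrix_apply_succ _ _ _ _ hb, jordanMatrix_mul_apply_of_succ_lt _ _ _ ha,
    eq_comm] at e

lemma commute_jordanMatrix_apply_add (h k : Fin t) (a b d : ℕ) (ha : a + d < u h)
    (hb : b + d < u k) :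
    M ⟨h, ⟨a + d, ha⟩⟩ ⟨k, ⟨b + d, hb⟩⟩ = M ⟨h, ⟨a, by omega⟩⟩ ⟨k, ⟨b, by omega⟩⟩ := by
  induction d with
  | zero => rfl
  | succ d ih =>
    rw [← ih (by omega) (by omega)]
    exact commute_jordanMatrix_apply_succ hM h k (a + d) (b + d) ha hb

lemma commute_jordanMatrix_apply_eq_of_add_eq {h k : Fin t} (a a' : Fin (u h)) (b b' : Fin (u k))
    (hab : (a : ℕ) + b' = a' + b) : M ⟨h, a⟩ ⟨k, b⟩ = M ⟨h, a'⟩ ⟨k, b'⟩ := by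
  wlog haa' : (a : ℕ) ≤ a' generalizing a a' b b'
  · exact (this a' a b' b (by omega) (by omega)).symm
  obtain ⟨a, ha⟩ := a
  obtain ⟨a', ha'⟩ := a'
  obtain ⟨b, hb⟩ := b
  obtain ⟨b', hb'⟩ := b'
  obtain ⟨d, rfl⟩ := Nat.exists_eq_add_of_le haa'
  obtain rfl : b' = b + d := by simp only at hab; omega
  exact (commute_jordanMatrix_apply_add hM h k a b d ha' hb').symm

lemma commute_jordanMatrix_apply_first_col (h k : Fin t) (a : ℕ) (ha₀ : 0 < a) (ha : a < u h)
    (hk : 0 < u k) : M ⟨h, ⟨a, ha⟩⟩ ⟨k, ⟨0, hk⟩⟩ = 0 := by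
  obtain ⟨a, rfl⟩ : ∃ a', a = a' + 1 := ⟨a - 1, by omega⟩
  have e := congrFun (congrFun hM ⟨h, ⟨a, by omega⟩⟩) ⟨k, ⟨0, hk⟩⟩
  rwa [mul_jordanMatrix_apply_zero, jordanMatrix_mul_apply_of_succ_lt _ _ _ ha, eq_comm] at e

lemma commute_jordanMatrix_apply_last_row (h k : Fin t) (a b : ℕ) (ha : a + 1 = u h)
    (hb : b + 1 < u k) : M ⟨h, ⟨a, by omega⟩⟩ ⟨k, ⟨b, by omega⟩⟩ = 0 := by
  have e := congrFun (congrFun hM ⟨h, ⟨a, by omega⟩⟩) ⟨k, ⟨b + 1, hb⟩⟩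
  rwa [mul_jordanMatrix_apply_succ _ _ _ _ hb, jordanMatrix_mul_apply_of_succ_eq _ _ _ ha] at e

lemma commute_jordanMatrix_apply_eq_zero {h k : Fin t} (a : Fin (u h)) (b : Fin (u k))
    (hab : (b : ℕ) < a + (u k - u h)) : M ⟨h, a⟩ ⟨k, b⟩ = 0 := by
  by_cases hba : (b : ℕ) < a
  · rw [commute_jordanMatrix_apply_eq_of_add_eq hM a ⟨a - b, by omega⟩ b ⟨0, by omega⟩
      (by simp only; omega)]
    exact commute_jordanMatrix_apply_first_col hM h k _ (by omega) _ _
  · rw [commute_jordanMatrix_apply_eq_of_add_eq hM a ⟨u h - 1, by omega⟩ b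
      ⟨b + (u h - 1 - a), by omega⟩ (by simp only; omega)]
    exact commute_jordanMatrix_apply_last_row hM h k _ _ (by omega) (by omega)

lemma commute_jordanMatrix_min_le_rank_matrixBlock {i j : Fin t} (a : Fin (u i)) (b : Fin (u j))
    (hab : (b : ℕ) = a + (u j - u i)) (hne : M ⟨i, a⟩ ⟨j, b⟩ ≠ 0) :
    min (u i) (u j) ≤ (matrixBlock M i j).rank := by
  set S := (matrixBlock M i j).submatrix (fun x : Fin (min (u i) (u j)) => ⟨x, by omega⟩)
    (fun y : Fin (min (u i) (u j)) => ⟨y + (u j - u i), by omega⟩)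
  have hS : S.IsUpperTriangular := fun x y hyx =>
    commute_jordanMatrix_apply_eq_zero hM _ _ (by have : (y : ℕ) < x := hyx; dsimp only; omega)
  have hdiag : ∀ x, S.diag x ≠ 0 := fun x => by
    simp only [S, Matrix.diag_apply, Matrix.submatrix_apply, matrixBlock]
    rwa [commute_jordanMatrix_apply_eq_of_add_eq hM _ a _ b (by simp only; omega)]
  calc min (u i) (u j) = (S * 1).rank := by
        rw [Matrix.rank_mul_eq_right_of_isUpperTriangular S 1 hS hdiag, Matrix.rank_one,
          Fintype.card_fin]
    _ ≤ (matrixBlock M i j).rank := by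
        rw [mul_one]
        exact Matrix.rank_submatrix_le _ _ _

end JordanCommutant

lemma entriesVanishBelow_one_add_jumpDefect {K : Type*} [Field K] {t : ℕ} {u : Fin t → ℕ}
    {H : Fin t → Fin t → ℕ} {A : Matrix (Σ h : Fin t, Fin (u h)) (Σ h : Fin t, Fin (u h)) K}
    (hu : Antitone u) (hH : IsJumpCount u H) (hcomm : Commute A (jordanMatrix u K))
    (hblocks : ∀ i j : Fin t, u i ≤ u j + 1 → u j ≤ u i + 1 →
      (matrixBlock A i j).rank ≤ min (u i) (u j) - 1) :
    EntriesVanishBelow A fun i j => 1 + jumpDefect u H i j := by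
  intro i j a b hab
  by_cases hlt : (b : ℕ) < a + (u j - u i)
  · exact commute_jordanMatrix_apply_eq_zero hcomm a b hlt
  have hdiag : (b : ℕ) = a + (u j - u i) := by simp only [jumpDefect] at hab; omega
  have hH0 : H (min i j) (max i j) = 0 := by simp only [jumpDefect] at hab; omega
  have hclose : u i ≤ u j + 1 ∧ u j ≤ u i + 1 := by
    rcases le_total i j with hij | hji
    · rw [min_eq_left hij, max_eq_right hij] at hH0
      exact ⟨hH.le_add_one_of_eq_zero hij hH0, (hu hij).trans (by omega)⟩
    · rw [min_eq_right hji, max_eq_left hji] at hH0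
      exact ⟨(hu hji).trans (by omega), hH.le_add_one_of_eq_zero hji hH0⟩
  by_contra hne
  have := commute_jordanMatrix_min_le_rank_matrixBlock hcomm a b hdiag hne
  have := hblocks i j hclose.1 hclose.2
  have := a.pos
  have := b.pos
  omega

theorem rank_block_pow_le_general (K : Type*) [Field K]
    (t : ℕ) (u : Fin t → ℕ) (hu : Antitone u)
    (A : Matrix (Σ h : Fin t, Fin (u h)) (Σ h : Fin t, Fin (u h)) K)
    (hcomm : A * jordanMatrix u K = jordanMatrix u K * A)
    (hblocks : ∀ i j : Fin t, u i ≤ u j + 1 → u j ≤ u i + 1 →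
      (matrixBlock A i j).rank ≤ min (u i) (u j) - 1)
    (hfun : Fin t → Fin t → ℕ)
    (hfun0 : ∀ i j : Fin t, i ≤ j → u i ≤ u j + 1 → hfun i j = 0)
    (hfunchain : ∀ i j : Fin t, i ≤ j → u j + 2 ≤ u i →
      ∃ c : Fin (hfun i j + 1) → Fin t, StrictMono c ∧ c 0 = i ∧
        (∀ l l' : Fin (hfun i j + 1), (l : ℕ) + 1 = (l' : ℕ) →
          u (c l') + 2 ≤ u (c l) ∧
          ∀ k : Fin t, c l ≤ k → k < c l' → u (c l) ≤ u k + 1) ∧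
        u j ≤ u (c (Fin.last (hfun i j))) ∧
        u (c (Fin.last (hfun i j))) ≤ u j + 1) :
    ∀ i j : Fin t, ∀ m : ℕ, 1 ≤ m →
      ((matrixBlock (A ^ m) i j).rank : ℤ) ≤
        max ((min (u i) (u j) : ℤ) - m + hfun (min i j) (max i j)) 0 := by
  intro i j m hm
  obtain ⟨m, rfl⟩ := Nat.exists_eq_add_of_le' hm
  have hH := isJumpCount_of_chain hu hfun0 hfunchain
  have hrank := ((entriesVanishBelow_one_add_jumpDefect hu hH hcomm hblocks).pow
    (hH.jumpDefect_le_add hu) m).rank_matrixBlock_le i j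
  simp only [jumpDefect] at hrank
  omega

/-- Let `B` be nilpotent in Jordan form with block sizes `u 1 ≥ … ≥ u t > 0`,
let `A` be nilpotent commuting with `B`, and suppose
`rank A_{ij} ≤ min (u i) (u j) − 1` whenever `|u i − u j| ≤ 1`.
Let `hfun i j` (for `i ≤ j`) be the number of jumps of size `≥ 2` in the block
sizes between positions `i` and `j`: it is `0` if `u i − u j ≤ 1`, and otherwise
it is characterised by the existence of a chain `i = k₀ < k₁ < … < k_{hfun i j}`
where each step drops by at least `2`, block sizes strictly between consecutive
chain points differ from the size at the previous chain point by at most `1`,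
and `0 ≤ u (k_last) − u j ≤ 1`.  Then for all `i`, `j` and all `m ≥ 1`,
`rank ((A^m)_{ij}) ≤ max (min (u i) (u j) − m + hfun (min i j) (max i j)) 0`
(as integers, the `max` with `0` encoding the convention that a non-positive
bound means the rank is `0`). -/
theorem rank_block_pow_le (K : Type*) [Field K]
    (t : ℕ) (u : Fin t → ℕ) (hu : Antitone u) (hupos : ∀ h, 0 < u h)
    (A : Matrix (Σ h : Fin t, Fin (u h)) (Σ h : Fin t, Fin (u h)) K)
    (hA : IsNilpotent A)
    (hcomm : A * jordanMatrix u K = jordanMatrix u K * A)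
    (hblocks : ∀ i j : Fin t, u i ≤ u j + 1 → u j ≤ u i + 1 →
      (matrixBlock A i j).rank ≤ min (u i) (u j) - 1)
    (hfun : Fin t → Fin t → ℕ)
    (hfun0 : ∀ i j : Fin t, i ≤ j → u i ≤ u j + 1 → hfun i j = 0)
    (hfunchain : ∀ i j : Fin t, i ≤ j → u j + 2 ≤ u i →
      ∃ c : Fin (hfun i j + 1) → Fin t, StrictMono c ∧ c 0 = i ∧
        (∀ l l' : Fin (hfun i j + 1), (l : ℕ) + 1 = (l' : ℕ) →
          u (c l') + 2 ≤ u (c l) ∧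
          ∀ k : Fin t, c l ≤ k → k < c l' → u (c l) ≤ u k + 1) ∧
        u j ≤ u (c (Fin.last (hfun i j))) ∧
        u (c (Fin.last (hfun i j))) ≤ u j + 1) :
    ∀ i j : Fin t, ∀ m : ℕ, 1 ≤ m →
      ((matrixBlock (A ^ m) i j).rank : ℤ) ≤
        max ((min (u i) (u j) : ℤ) - m + hfun (min i j) (max i j)) 0 :=
  rank_block_pow_le_general K t u hu A hcomm hblocks hfun hfun0 hfunchain
end

section
/- Over a field F, the subset of pairs (g₁, g₂) ∈ F[x]_{≤p₁} × F[x]_{≤p₂} such that g₂ ≠ 0 and g₁ does not belong to the radical of the ideal (g₂) is Zariski open, and it is non-empty when p₂ ≥ 1. -/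
/-!
Since `g₂ ≠ 0` has at most `p₂` prime factors counted with multiplicity and each prime factor of
`g₂` divides any `g₁` in the radical of `(g₂)`, we have `g₁ ∈ √(g₂)` iff `g₂ ∣ g₁ ^ p₂`. Put
`h = g₁ ^ p₂`, of degree `≤ p₂ p₁`. Then `g₂ ≠ 0 ∧ g₂ ∤ h` holds iff `h` and the `X ^ j * g₂`,
`j ≤ p₂ p₁`, are linearly independent, i.e. iff their coefficient matrix has a nonzero maximal
minor. These minors are polynomials in the coefficients of `g₁` and `g₂`, so the set is the
complement of their common zero locus. The pair `(1, X)` lies in it.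
-/

/-- The Zariski topology on the affine space `σ → F` over a field `F`. -/
def affineZariskiTopology (σ F : Type*) [Field F] : TopologicalSpace (σ → F) :=
  TopologicalSpace.generateFrom
    {U | ∃ S : Set (MvPolynomial σ F),
      Uᶜ = {c | ∀ p ∈ S, MvPolynomial.eval c p = 0}}

/-- The polynomial of degree `≤ p` with coefficient tuple `c : Fin (p+1) → F`. -/
noncomputable def polyOfCoeffs {F : Type*} [Field F] {p : ℕ} (c : Fin (p + 1) → F) :
    Polynomial F :=
  ∑ i : Fin (p + 1), Polynomial.C (c i) * Polynomial.X ^ (i : ℕ)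

theorem Matrix.exists_det_submatrix_ne_zero_iff {K m n : Type*} [Field K] [Fintype m] [Fintype n]
    [DecidableEq n] (M : Matrix m n K) :
    (∃ r : n → m, (M.submatrix r id).det ≠ 0) ↔ LinearIndependent K M.col := by
  constructor
  · rintro ⟨r, hr⟩
    exact (linearIndependent_cols_of_det_ne_zero hr).of_comp (LinearMap.funLeft K K r)
  · intro h
    obtain ⟨κ, a, ha, hspan, hli⟩ := exists_linearIndependent' K M.row
    have : Fintype κ := Fintype.ofInjective a ha
    -- `a` picks out a basis of the row space, whose dimension is `rank M = card n`.
    have hcard : Fintype.card n = Fintype.card κ := by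
      rw [← (M.row_transpose ▸ h : LinearIndependent K M.transpose.row).rank_matrix,
        rank_transpose, rank_eq_finrank_span_row, ← hspan,
        linearIndependent_iff_card_eq_finrank_span.mp hli, Set.finrank]
    let e := Fintype.equivOfCardEq hcard
    refine ⟨a ∘ e, fun hdet => ?_⟩
    have hrows : LinearIndependent K (M.submatrix (a ∘ e) id).row := hli.comp e e.injective
    rw [linearIndependent_rows_iff_isUnit, isUnit_iff_isUnit_det, hdet] at hrows
    exact not_isUnit_zero hrows

theorem UniqueFactorizationMonoid.dvd_pow_card_factors {α : Type*} [CommMonoidWithZero α]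
    [UniqueFactorizationMonoid α] {a b : α} (ha : a ≠ 0) (h : ∀ p ∈ factors a, p ∣ b) :
    a ∣ b ^ Multiset.card (factors a) :=
  calc a ∣ ((factors a).map id).prod := by rw [Multiset.map_id]; exact (factors_prod ha).symm.dvd
    _ ∣ ((factors a).map fun _ => b).prod := Multiset.prod_dvd_prod_of_dvd _ _ h
    _ = b ^ Multiset.card (factors a) := by rw [Multiset.map_const', Multiset.prod_replicate]

namespace Polynomial

theorem mem_degreeLT_succ_iff {R : Type*} [Semiring R] {f : R[X]} {n : ℕ} :
    f ∈ degreeLT R (n + 1) ↔ f.natDegree ≤ n := by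
  rw [degreeLT_succ_eq_degreeLE, mem_degreeLE, natDegree_le_iff_degree_le]

theorem span_range_X_pow (R : Type*) [Semiring R] (n : ℕ) :
    Submodule.span R (Set.range fun j : Fin n => (X ^ (j : ℕ) : R[X])) = degreeLT R n := by
  rw [← Submodule.map_subtype_top (degreeLT R n), ← (degreeLT.basis R n).span_eq,
    Submodule.map_span, ← Set.range_comp]
  congr
  ext j : 1
  simp

theorem span_range_X_pow_mul {R : Type*} [CommSemiring R] (g : R[X]) (n : ℕ) :
    Submodule.span R (Set.range fun j : Fin n => X ^ (j : ℕ) * g) =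
      (degreeLT R n).map (LinearMap.mulRight R g) := by
  rw [← span_range_X_pow, Submodule.map_span, ← Set.range_comp]
  rfl

theorem linearIndependent_X_pow (R : Type*) [Semiring R] (n : ℕ) :
    LinearIndependent R fun j : Fin n => (X ^ (j : ℕ) : R[X]) := by
  convert (basisMonomials R).linearIndependent.comp _ Fin.val_injective
  simp [← monomial_one_right_eq_X_pow]

theorem dvd_iff_exists_mem_degreeLT_mul_eq {R : Type*} [CommSemiring R] [NoZeroDivisors R]
    {g f : R[X]} {n : ℕ} (hf : f ∈ degreeLT R n) :
    g ∣ f ↔ ∃ q ∈ degreeLT R n, q * g = f := by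
  refine ⟨?_, fun ⟨q, _, hq⟩ => ⟨q, by rw [← hq, mul_comm]⟩⟩
  rintro ⟨q, rfl⟩
  rcases eq_or_ne (g * q) 0 with h0 | h0
  · exact ⟨0, zero_mem _, by rw [zero_mul, h0]⟩
  · exact ⟨q, mem_degreeLT.2 ((degree_le_of_dvd (dvd_mul_left q g) h0).trans_lt
      (mem_degreeLT.1 hf)), mul_comm q g⟩

theorem linearIndependent_option_X_pow_mul_iff {K : Type*} [Field K] {g f : K[X]} {n : ℕ}
    (hf : f ∈ degreeLT K n) :
    LinearIndependent K (fun o : Option (Fin n) => Option.casesOn' o f fun j => X ^ (j : ℕ) * g) ↔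
      g ≠ 0 ∧ ¬ g ∣ f := by
  rw [linearIndependent_option', span_range_X_pow_mul, dvd_iff_exists_mem_degreeLT_mul_eq hf]
  simp only [Submodule.mem_map, LinearMap.mulRight_apply]
  refine and_congr_left fun hndvd => ⟨?_, fun hg => ?_⟩
  · -- For `g = 0` only the empty family is independent, and then `f ∈ degreeLT K 0` is `0`.
    rintro hli rfl
    obtain _ | k := n
    · exact hndvd ⟨0, zero_mem _, (by simpa [mem_degreeLT] using hf : f = 0).symm⟩
    · exact hli.ne_zero 0 (mul_zero _)
  · exact (linearIndependent_X_pow K n).map' (LinearMap.mulRight K g)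
      (LinearMap.ker_eq_bot.2 (mul_left_injective₀ hg))

def coeffMatrix {R ι : Type*} [Semiring R] (m : ℕ) (P : ι → R[X]) : Matrix (Fin m) ι R :=
  Matrix.of fun i j => (P j).coeff i

theorem coeffMatrix_map {R S ι : Type*} [Semiring R] [Semiring S] (f : R →+* S) (m : ℕ)
    (P : ι → R[X]) : (coeffMatrix m P).map f = coeffMatrix m fun j => (P j).map f := by
  ext
  simp [coeffMatrix]

theorem linearIndependent_coeffMatrix_col_iff {R ι : Type*} [Ring R] {m : ℕ} {P : ι → R[X]}
    (hP : ∀ j, P j ∈ degreeLT R m) :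
    LinearIndependent R (coeffMatrix m P).col ↔ LinearIndependent R P := by
  have hdisj : Disjoint (Submodule.span R (Set.range P))
      (LinearMap.ker (LinearMap.pi fun i : Fin m => lcoeff R i)) := by
    refine Submodule.disjoint_def.2 fun q hq hker => ?_
    have hq' := Submodule.span_le.2 (Set.range_subset_iff.2 hP) hq
    exact (degreeLTEquiv_eq_zero_iff_eq_zero hq').1 hker
  exact LinearMap.linearIndependent_iff_of_disjoint _ hdisj

theorem linearIndependent_coeffMatrix_X_pow_mul_iff {K : Type*} [Field K] {g f : K[X]} {d n : ℕ}
    (hg : g.natDegree ≤ d) (hf : f.natDegree ≤ n) :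
    LinearIndependent K (coeffMatrix (n + d + 1) fun o : Option (Fin (n + 1)) =>
      Option.casesOn' o f fun j => X ^ (j : ℕ) * g).col ↔ g ≠ 0 ∧ ¬ g ∣ f := by
  rw [← linearIndependent_option_X_pow_mul_iff (mem_degreeLT_succ_iff.2 hf),
    linearIndependent_coeffMatrix_col_iff]
  rintro (_ | j) <;> refine mem_degreeLT_succ_iff.2 ?_
  · exact hf.trans (Nat.le_add_right n d)
  · refine natDegree_mul_le.trans (add_le_add (natDegree_X_pow_le _) hg |>.trans ?_)
    have := j.is_le
    omega

open UniqueFactorizationMonoid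

theorem card_factors_le_natDegree {K : Type*} [Field K] (g : K[X]) :
    Multiset.card (factors g) ≤ g.natDegree := by
  rcases eq_or_ne g 0 with rfl | hg
  · simp
  calc Multiset.card (factors g)
      = Multiset.card ((factors g).map natDegree) • 1 := by simp
    _ ≤ ((factors g).map natDegree).sum := Multiset.card_nsmul_le_sum fun d hd => by
        obtain ⟨q, hq, rfl⟩ := Multiset.mem_map.1 hd
        exact (irreducible_of_factor q hq).natDegree_pos
    _ = g.natDegree := by
        rw [← natDegree_multiset_prod _ fun h0 => (prime_of_factor 0 h0).ne_zero rfl]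
        exact natDegree_eq_of_degree_eq (degree_eq_degree_of_associated (factors_prod hg))

theorem mem_radical_span_singleton_iff_dvd_pow {K : Type*} [Field K] {f g : K[X]} {p : ℕ}
    (hg : g ≠ 0) (hp : g.natDegree ≤ p) :
    f ∈ (Ideal.span {g}).radical ↔ g ∣ f ^ p := by
  refine ⟨fun ⟨n, hn⟩ => ?_, fun h => ⟨p, Ideal.mem_span_singleton.2 h⟩⟩
  have hfactors : ∀ q ∈ factors g, q ∣ f := fun q hq =>
    (prime_of_factor q hq).dvd_of_dvd_pow
      ((dvd_of_mem_factors hq).trans (Ideal.mem_span_singleton.1 hn))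
  exact (dvd_pow_card_factors hg hfactors).trans
    (pow_dvd_pow f ((card_factors_le_natDegree g).trans hp))

theorem ne_zero_and_notMem_radical_iff_linearIndependent {K : Type*} [Field K] {g₁ g₂ : K[X]}
    {p₁ p₂ : ℕ} (h₁ : g₁.natDegree ≤ p₁) (h₂ : g₂.natDegree ≤ p₂) :
    g₂ ≠ 0 ∧ g₁ ∉ (Ideal.span {g₂}).radical ↔
      LinearIndependent K (coeffMatrix (p₂ * p₁ + p₂ + 1) fun o : Option (Fin (p₂ * p₁ + 1)) =>
        Option.casesOn' o (g₁ ^ p₂) fun j => X ^ (j : ℕ) * g₂).col := by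
  rw [linearIndependent_coeffMatrix_X_pow_mul_iff h₂
    (natDegree_pow_le.trans (Nat.mul_le_mul_left p₂ h₁))]
  exact and_congr_right fun hg => not_congr (mem_radical_span_singleton_iff_dvd_pow hg h₂)

end Polynomial

open Polynomial

theorem natDegree_polyOfCoeffs_le {F : Type*} [Field F] {p : ℕ} (c : Fin (p + 1) → F) :
    (polyOfCoeffs c).natDegree ≤ p :=
  mem_degreeLT_succ_iff.1 <| Submodule.sum_mem _ fun i _ => by
    rw [C_mul_X_pow_eq_monomial]
    exact monomial_coe_mem_degreeLT i (c i)

theorem polyOfCoeffs_single {F : Type*} [Field F] {p : ℕ} (i : Fin (p + 1)) (a : F) :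
    polyOfCoeffs (Pi.single i a) = C a * X ^ (i : ℕ) := by
  simp [polyOfCoeffs, Pi.single_apply, apply_ite C, ite_mul]

noncomputable def genericPoly {σ R : Type*} [CommSemiring R] {p : ℕ} (v : Fin (p + 1) → σ) :
    (MvPolynomial σ R)[X] :=
  ∑ i, C (MvPolynomial.X (v i)) * X ^ (i : ℕ)

theorem map_eval_genericPoly {σ F : Type*} [Field F] {p : ℕ} (v : Fin (p + 1) → σ) (c : σ → F) :
    (genericPoly v).map (MvPolynomial.eval c) = polyOfCoeffs fun i => c (v i) := by
  simp [genericPoly, polyOfCoeffs, Polynomial.map_sum]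

theorem isOpen_setOf_linearIndependent_col_map_eval {σ F m n : Type*} [Field F] [Fintype m]
    [Fintype n] [DecidableEq n] (M : Matrix m n (MvPolynomial σ F)) :
    @IsOpen (σ → F) (affineZariskiTopology σ F)
      {c | LinearIndependent F (M.map (MvPolynomial.eval c)).col} := by
  refine TopologicalSpace.isOpen_generateFrom_of_mem
    ⟨Set.range fun r : n → m => (M.submatrix r id).det, ?_⟩
  ext c
  simp only [Set.mem_compl_iff, Set.mem_ofPred_eq, Set.forall_mem_range,
    ← Matrix.exists_det_submatrix_ne_zero_iff, not_exists, not_not, RingHom.map_det,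
    RingHom.mapMatrix_apply, Matrix.submatrix_map]

/-- Over a field `F`, the subset of pairs `(g₁, g₂) ∈ F[x]_{≤p₁} × F[x]_{≤p₂}`
(identified with the affine space of coefficient tuples) such that `g₂ ≠ 0` and
`g₁` does not belong to the radical of the ideal `(g₂)` is Zariski open, and it
is non-empty when `p₂ ≥ 1`. -/
theorem notMem_radical_open_nonempty (F : Type*) [Field F] (p₁ p₂ : ℕ) :
    @IsOpen ((Fin (p₁ + 1) ⊕ Fin (p₂ + 1)) → F)
      (affineZariskiTopology _ F)
      {c | polyOfCoeffs (fun i => c (Sum.inr i)) ≠ 0 ∧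
        polyOfCoeffs (fun i => c (Sum.inl i)) ∉
          (Ideal.span {polyOfCoeffs (fun i => c (Sum.inr i))}).radical} ∧
    (1 ≤ p₂ →
      {c : (Fin (p₁ + 1) ⊕ Fin (p₂ + 1)) → F |
        polyOfCoeffs (fun i => c (Sum.inr i)) ≠ 0 ∧
        polyOfCoeffs (fun i => c (Sum.inl i)) ∉
          (Ideal.span {polyOfCoeffs (fun i => c (Sum.inr i))}).radical}.Nonempty) := by
  let G₁ : (MvPolynomial (Fin (p₁ + 1) ⊕ Fin (p₂ + 1)) F)[X] := genericPoly Sum.inl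
  let G₂ : (MvPolynomial (Fin (p₁ + 1) ⊕ Fin (p₂ + 1)) F)[X] := genericPoly Sum.inr
  let M := coeffMatrix (p₂ * p₁ + p₂ + 1) fun o : Option (Fin (p₂ * p₁ + 1)) =>
    Option.casesOn' o (G₁ ^ p₂) fun j => X ^ (j : ℕ) * G₂
  have hS : {c | polyOfCoeffs (fun i => c (Sum.inr i)) ≠ 0 ∧
      polyOfCoeffs (fun i => c (Sum.inl i)) ∉
        (Ideal.span {polyOfCoeffs (fun i => c (Sum.inr i))}).radical} =
      {c | LinearIndependent F (M.map (MvPolynomial.eval c)).col} := by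
    ext c
    have hM : M.map (MvPolynomial.eval c) = coeffMatrix (p₂ * p₁ + p₂ + 1)
        fun o : Option (Fin (p₂ * p₁ + 1)) => Option.casesOn' o
          (polyOfCoeffs (fun i => c (Sum.inl i)) ^ p₂)
          fun j => X ^ (j : ℕ) * polyOfCoeffs (fun i => c (Sum.inr i)) := by
      rw [coeffMatrix_map]
      congr with (_ | j) <;> simp [G₁, G₂, Polynomial.map_mul, map_eval_genericPoly]
    rw [Set.mem_ofPred_eq, Set.mem_ofPred_eq, hM]
    exact ne_zero_and_notMem_radical_iff_linearIndependent (natDegree_polyOfCoeffs_le _)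
      (natDegree_polyOfCoeffs_le _)
  refine ⟨hS ▸ isOpen_setOf_linearIndependent_col_map_eval M, fun hp₂ => ?_⟩
  refine ⟨Sum.elim (Pi.single 0 1) (Pi.single ⟨1, by omega⟩ 1), ?_⟩
  simpa [polyOfCoeffs_single, ← Ideal.eq_top_iff_one, Ideal.radical_eq_top] using not_isUnit_X
end

section
/- Define F(l,l') = x₁x + … + x_l x^l + y₁y + … + y_{l'}y^{l'} over ℤ[x₁,…,x_l,y₁,…,y_{l'}], and let f_h(l,l',k) be the coefficient of x^h in F(l,l',k), where F(l,l',k) is obtained from F(l,l')^k by substituting x^i y^j ↦ y^{i+j} for i,j ≥ 1. Then for k ≥ 2: if h ≤ k−1 then f_h(l,l',k) = 0, and if h > k−1 then f_h(l,l',k) is a homogeneous polynomial of degree k in the variables x₁,…,x_{min{l, h−k+1}}. -/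
/-!
Expanding `F(l,l')^k` as a sum over words `p` of length `k` in the coefficient variables, the
coefficient of `x^h y^0` collects the words whose exponents add up to `(h, 0)`. Every `y`-variable
carries a positive power of `y`, so only the `x`-variables `x_i` occur, each contributing `i ≥ 1`
to `h`. Hence `h ≥ k`, every surviving word is a monomial of degree `k`, and each of its indices
satisfies `i ≤ h - (k - 1)`.
-/

/-- `F(l,l') = x₁x + … + x_l x^l + y₁y + … + y_{l'} y^{l'}`, viewed as a
polynomial in two variables `x = X 0`, `y = X 1` with coefficients in
`ℤ[x₁,…,x_l,y₁,…,y_{l'}]`. -/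
noncomputable def Fpoly (l l' : ℕ) :
    MvPolynomial (Fin 2) (MvPolynomial (Fin l ⊕ Fin l') ℤ) :=
  (∑ i : Fin l,
      MvPolynomial.C (MvPolynomial.X (Sum.inl i)) * MvPolynomial.X 0 ^ ((i : ℕ) + 1)) +
  ∑ j : Fin l',
      MvPolynomial.C (MvPolynomial.X (Sum.inr j)) * MvPolynomial.X 1 ^ ((j : ℕ) + 1)

/-- `f_h(l,l',k)`: the coefficient of `x^h` in `F(l,l',k)`, where `F(l,l',k)`
is obtained from `F(l,l')^k` by the substitution `x^i y^j ↦ y^{i+j}` for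
`i, j ≥ 1`.  Since that substitution produces no pure powers of `x`, this is
the coefficient of the monomial `x^h y^0` in `F(l,l')^k`. -/
noncomputable def fCoeff (l l' k h : ℕ) : MvPolynomial (Fin l ⊕ Fin l') ℤ :=
  MvPolynomial.coeff (Finsupp.single 0 h) (Fpoly l l' ^ k)

open MvPolynomial Finset

theorem MvPolynomial.coeff_sum_monomial_pow {σ ι R : Type*} [CommSemiring R] [DecidableEq σ]
    [Fintype ι] (e : ι → σ →₀ ℕ) (c : ι → R) (k : ℕ) (m : σ →₀ ℕ) :
    coeff m ((∑ i, monomial (e i) (c i)) ^ k) =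
      ∑ p : Fin k → ι with ∑ t, e (p t) = m, ∏ t, c (p t) := by
  simp_rw [Fintype.sum_pow, coeff_sum, ← monomial_sum_prod, coeff_monomial, sum_ite,
    sum_const_zero, add_zero]

section Fpoly

variable {l l' : ℕ}

noncomputable def fExponent : Fin l ⊕ Fin l' → Fin 2 →₀ ℕ :=
  Sum.elim (fun i => Finsupp.single 0 ((i : ℕ) + 1)) (fun j => Finsupp.single 1 ((j : ℕ) + 1))

theorem Fpoly_eq_sum_monomial :
    Fpoly l l' = ∑ s : Fin l ⊕ Fin l', monomial (fExponent s) (X s) := by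
  simp [Fpoly, Fintype.sum_sum_type, fExponent, X_pow_eq_monomial, C_mul_monomial]

theorem fCoeff_eq_sum (k h : ℕ) :
    fCoeff l l' k h =
      ∑ p : Fin k → Fin l ⊕ Fin l' with ∑ t, fExponent (p t) = Finsupp.single 0 h,
        ∏ t, X (p t) := by
  rw [fCoeff, Fpoly_eq_sum_monomial, coeff_sum_monomial_pow]

theorem exists_inl_of_sum_fExponent_eq {k h : ℕ} {p : Fin k → Fin l ⊕ Fin l'}
    (hp : ∑ t, fExponent (p t) = Finsupp.single 0 h) :
    ∃ q : Fin k → Fin l, p = Sum.inl ∘ q ∧ ∑ t, (q t : ℕ) + k = h := by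
  have hy : ∀ t, fExponent (p t) 1 = 0 := by
    simpa [Finsupp.finsetSum_apply] using DFunLike.congr_fun hp 1
  have hinl : ∀ t, ∃ i, p t = Sum.inl i := fun t => by
    rcases hpt : p t with i | j
    · exact ⟨i, rfl⟩
    · simpa [hpt, fExponent] using hy t
  choose q hq using hinl
  refine ⟨q, funext hq, ?_⟩
  simpa [Finsupp.finsetSum_apply, hq, fExponent, sum_add_distrib] using DFunLike.congr_fun hp 0

end Fpoly

theorem fCoeff_vanish_or_homogeneous_general (l l' : ℕ)
    (k h : ℕ) (hk : 2 ≤ k) :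
    (h ≤ k - 1 → fCoeff l l' k h = 0) ∧
    (k - 1 < h →
      (fCoeff l l' k h).IsHomogeneous k ∧
      ∀ v ∈ (fCoeff l l' k h).vars,
        ∃ i : Fin l, v = Sum.inl i ∧ (i : ℕ) + 1 ≤ min l (h - k + 1)) := by
  refine ⟨fun hh => ?_, fun _ => ⟨?_, fun v hv => ?_⟩⟩
  · rw [fCoeff_eq_sum]
    refine sum_eq_zero fun p hp => absurd (exists_inl_of_sum_fExponent_eq (mem_filter.1 hp).2) ?_
    rintro ⟨q, -, hq⟩
    omega
  · rw [fCoeff_eq_sum]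
    refine IsHomogeneous.sum _ _ _ fun p _ => ?_
    simpa using IsHomogeneous.prod univ _ (fun _ => 1) fun t _ => isHomogeneous_X ℤ (p t)
  · rw [fCoeff_eq_sum] at hv
    obtain ⟨p, hp, hvp⟩ := mem_biUnion.1 (vars_sum_subset _ _ hv)
    obtain ⟨t, -, hvt⟩ := mem_biUnion.1 (vars_prod _ hvp)
    obtain ⟨q, rfl, hq⟩ := exists_inl_of_sum_fExponent_eq (mem_filter.1 hp).2
    have hqt : (q t : ℕ) ≤ ∑ t, (q t : ℕ) :=
      single_le_sum (f := fun t => (q t : ℕ)) (fun _ _ => Nat.zero_le _) (mem_univ t)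
    refine ⟨q t, by simpa using hvt, le_min (q t).isLt ?_⟩
    omega

/-- For `k ≥ 2`: if `h ≤ k − 1` then `f_h(l,l',k) = 0`, and if `h > k − 1` then
`f_h(l,l',k)` is a homogeneous polynomial of degree `k` in the variables
`x₁, …, x_{min l (h−k+1)}`. -/
theorem fCoeff_vanish_or_homogeneous (l l' : ℕ) (hl : 1 ≤ l) (hl' : 1 ≤ l')
    (k h : ℕ) (hk : 2 ≤ k) :
    (h ≤ k - 1 → fCoeff l l' k h = 0) ∧
    (k - 1 < h →
      (fCoeff l l' k h).IsHomogeneous k ∧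
      ∀ v ∈ (fCoeff l l' k h).vars,
        ∃ i : Fin l, v = Sum.inl i ∧ (i : ℕ) + 1 ≤ min l (h - k + 1)) :=
  fCoeff_vanish_or_homogeneous_general l l' k h hk
end

section
/- With F(l,l',k) and f_h, f'_h as above, if p is a prime with p > k, then p divides no coefficient of f_h(l,l',k), nor of f'_h(l,l',k) (the coefficient of y^h in F(l,l',k)), nor of the polynomial obtained from f'_h(l,l',k) by setting y₁ = 1 and y₂ = … = y_{l'} = 0. -/
/-- `f'_h(l,l',k)`: the coefficient of `y^h` in `F(l,l',k)`.  Under the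
substitution `x^i y^j ↦ y^{i+j}` (for `i, j ≥ 1`) it is the sum of the
coefficient of `y^h` in `F(l,l')^k` and the coefficients of all the mixed
monomials `x^i y^{h−i}` with `1 ≤ i ≤ h − 1` in `F(l,l')^k`. -/
noncomputable def f'Coeff (l l' k h : ℕ) : MvPolynomial (Fin l ⊕ Fin l') ℤ :=
  MvPolynomial.coeff (Finsupp.single 1 h) (Fpoly l l' ^ k) +
  ∑ i ∈ Finset.Ico 1 h,
    MvPolynomial.coeff (Finsupp.single 0 i + Finsupp.single 1 (h - i)) (Fpoly l l' ^ k)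

/-- Substituting `y₁ = 1` and `y₂ = … = y_{l'} = 0` in a polynomial of
`ℤ[x₁,…,x_l,y₁,…,y_{l'}]`. -/
noncomputable def setY (l l' : ℕ) (g : MvPolynomial (Fin l ⊕ Fin l') ℤ) :
    MvPolynomial (Fin l ⊕ Fin l') ℤ :=
  MvPolynomial.aeval
    (fun v => match v with
      | Sum.inl i => MvPolynomial.X (Sum.inl i)
      | Sum.inr j => if (j : ℕ) = 0 then 1 else 0) g


open MvPolynomial Finset
set_option maxHeartbeats 1000000

section Generic
variable {σ : Type*} {V : Type*} [Fintype V] [DecidableEq V]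

omit [Fintype V] [DecidableEq V] in
lemma prod_monomial_aux {τ : Type*} {R : Type*} [CommSemiring R]
    (s : Finset V) (a : V → (τ →₀ ℕ)) (b : V → R) :
    ∏ v ∈ s, MvPolynomial.monomial (a v) (b v)
      = MvPolynomial.monomial (∑ v ∈ s, a v) (∏ v ∈ s, b v) := by
  induction s using Finset.cons_induction with
  | empty => simp
  | cons w s hw ih =>
      rw [Finset.prod_cons, ih, Finset.sum_cons, Finset.prod_cons, monomial_mul]

noncomputable def Pgen (t : V → (Fin 2 →₀ ℕ)) (u : V → (σ →₀ ℕ)) :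
    MvPolynomial (Fin 2) (MvPolynomial σ ℤ) :=
  ∑ v : V, MvPolynomial.monomial (t v) (MvPolynomial.monomial (u v) (1 : ℤ))

lemma key (t : V → (Fin 2 →₀ ℕ)) (u : V → (σ →₀ ℕ)) (k : ℕ)
    (hu : ∀ c : V → ℕ, c ∈ Finset.piAntidiag (Finset.univ : Finset V) k →
          ∀ c' : V → ℕ, c' ∈ Finset.piAntidiag (Finset.univ : Finset V) k →
          (∑ v : V, c v • u v) = (∑ v : V, c' v • u v) → c = c')
    (m : Fin 2 →₀ ℕ) (d : σ →₀ ℕ)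
    (hne : MvPolynomial.coeff d (MvPolynomial.coeff m ((Pgen t u) ^ k)) ≠ 0) :
    (∃ c : V → ℕ, (∑ v : V, c v = k) ∧ (∑ v : V, c v • t v) = m
        ∧ (∑ v : V, c v • u v) = d)
      ∧ MvPolynomial.coeff d (MvPolynomial.coeff m ((Pgen t u) ^ k)) ∣ (k.factorial : ℤ) := by
  classical
  have hexp : MvPolynomial.coeff d (MvPolynomial.coeff m ((Pgen t u) ^ k))
      = ∑ c ∈ Finset.piAntidiag (Finset.univ : Finset V) k,
          (if (∑ v : V, c v • t v) = m ∧ (∑ v : V, c v • u v) = d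
            then (Nat.multinomial Finset.univ c : ℤ) else 0) := by
    rw [Pgen, Finset.sum_pow_eq_sum_piAntidiag, MvPolynomial.coeff_sum,
      MvPolynomial.coeff_sum]
    refine Finset.sum_congr rfl fun c _ => ?_
    have h1 : ∀ v : V, (MvPolynomial.monomial (t v) (MvPolynomial.monomial (u v) (1:ℤ))) ^ c v
        = MvPolynomial.monomial (c v • t v) (MvPolynomial.monomial (c v • u v) (1:ℤ)) := by
      intro v
      rw [monomial_pow, monomial_pow, one_pow]
    have h2 : ∏ v : V, (MvPolynomial.monomial (t v) (MvPolynomial.monomial (u v) (1:ℤ))) ^ c v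
        = MvPolynomial.monomial (∑ v : V, c v • t v)
            (MvPolynomial.monomial (∑ v : V, c v • u v) (1:ℤ)) := by
      rw [Finset.prod_congr rfl fun v _ => h1 v, prod_monomial_aux, prod_monomial_aux]
      simp
    rw [h2]
    have h3 : ((Nat.multinomial Finset.univ c : MvPolynomial (Fin 2) (MvPolynomial σ ℤ)))
        * MvPolynomial.monomial (∑ v : V, c v • t v)
            (MvPolynomial.monomial (∑ v : V, c v • u v) (1:ℤ))
      = (Nat.multinomial Finset.univ c) •
          MvPolynomial.monomial (∑ v : V, c v • t v)
            (MvPolynomial.monomial (∑ v : V, c v • u v) (1:ℤ)) := by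
      rw [nsmul_eq_mul]
    rw [h3, MvPolynomial.coeff_smul, MvPolynomial.coeff_monomial]
    by_cases hm : (∑ v : V, c v • t v) = m
    · by_cases hd : (∑ v : V, c v • u v) = d
      · simp only [hm, hd, if_pos, if_true, and_self, MvPolynomial.coeff_smul,
          MvPolynomial.coeff_monomial, smul_eq_mul, mul_one]
        simp
      · simp only [hm, hd, if_true, and_false, if_false, MvPolynomial.coeff_smul,
          MvPolynomial.coeff_monomial, smul_eq_mul, mul_zero]
        simp
    · simp [hm]
  rw [hexp] at hne ⊢
  obtain ⟨c0, hc0mem, hc0ne⟩ := Finset.exists_ne_zero_of_sum_ne_zero hne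
  have hc0 : (∑ v : V, c0 v • t v) = m ∧ (∑ v : V, c0 v • u v) = d := by
    by_contra hcon; simp [hcon] at hc0ne
  have hsum : (∑ c ∈ Finset.piAntidiag (Finset.univ : Finset V) k,
      (if (∑ v : V, c v • t v) = m ∧ (∑ v : V, c v • u v) = d
        then (Nat.multinomial Finset.univ c : ℤ) else 0))
      = (Nat.multinomial Finset.univ c0 : ℤ) := by
    rw [Finset.sum_eq_single_of_mem c0 hc0mem]
    · simp [hc0]
    · intro c hc hne'
      have hcon : ¬ ((∑ v : V, c v • t v) = m ∧ (∑ v : V, c v • u v) = d) := by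
        rintro ⟨h1, h2⟩
        exact hne' (hu c hc c0 hc0mem (h2.trans hc0.2.symm))
      simp [hcon]
  have hmemk : ∑ v : V, c0 v = k := by
    simpa using (Finset.mem_piAntidiag.mp hc0mem).1
  refine ⟨⟨c0, hmemk, hc0.1, hc0.2⟩, ?_⟩
  rw [hsum]
  have hspec := Nat.multinomial_spec Finset.univ c0
  have hdvd : Nat.multinomial Finset.univ c0 ∣ k.factorial := by
    have h4 := hspec.symm
    rw [hmemk] at h4
    exact ⟨_, by rw [h4, mul_comm]⟩
  exact_mod_cast Int.natCast_dvd_natCast.mpr hdvd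

end Generic

section Cases
open Finsupp

lemma aux_prime {k p : ℕ} (hp : p.Prime) (hpk : k < p) (a : ℤ)
    (ha : a ∣ (k.factorial : ℤ)) : ¬ (p : ℤ) ∣ a := by
  intro hpa
  have : (p : ℤ) ∣ (k.factorial : ℤ) := hpa.trans ha
  have : p ∣ k.factorial := Int.natCast_dvd_natCast.mp this
  have := (Nat.Prime.dvd_factorial hp).mp this
  omega

lemma sum_dvd_helper {ι : Type*} (s : Finset ι) (f : ι → ℤ) (K : ℤ)
    (h1 : ∀ i ∈ s, f i ≠ 0 → f i ∣ K)
    (h2 : ∀ i ∈ s, ∀ j ∈ s, f i ≠ 0 → f j ≠ 0 → i = j)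
    (hne : (∑ i ∈ s, f i) ≠ 0) : (∑ i ∈ s, f i) ∣ K := by
  obtain ⟨i0, hi0, hfi0⟩ := Finset.exists_ne_zero_of_sum_ne_zero hne
  rw [Finset.sum_eq_single_of_mem i0 hi0 (fun j hj hji => by
    by_contra hfj; exact hji (h2 j hj i0 hi0 hfj hfi0))]
  exact h1 i0 hi0 hfi0

variable (l l' k : ℕ)

/-- variables data for case A -/
noncomputable def tA : (Fin l ⊕ Fin l') → (Fin 2 →₀ ℕ)
  | Sum.inl i => Finsupp.single 0 ((i : ℕ) + 1)
  | Sum.inr j => Finsupp.single 1 ((j : ℕ) + 1)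

noncomputable def uA : (Fin l ⊕ Fin l') → ((Fin l ⊕ Fin l') →₀ ℕ) :=
  fun v => Finsupp.single v 1

lemma Fpoly_eq : Fpoly l l' = Pgen (tA l l') (uA l l') := by
  rw [Fpoly, Pgen, Fintype.sum_sum_type]
  congr 1
  · refine Finset.sum_congr rfl fun i _ => ?_
    rw [C_mul_X_pow_eq_monomial]
    rfl
  · refine Finset.sum_congr rfl fun j _ => ?_
    rw [C_mul_X_pow_eq_monomial]
    rfl

lemma huA : ∀ c : (Fin l ⊕ Fin l') → ℕ,
    c ∈ Finset.piAntidiag (Finset.univ : Finset (Fin l ⊕ Fin l')) k →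
    ∀ c' : (Fin l ⊕ Fin l') → ℕ,
    c' ∈ Finset.piAntidiag (Finset.univ : Finset (Fin l ⊕ Fin l')) k →
    (∑ v, c v • uA l l' v) = (∑ v, c' v • uA l l' v) → c = c' := by
  intro c _ c' _ hcc
  have key : ∀ (c : (Fin l ⊕ Fin l') → ℕ) w, (∑ v, c v • uA l l' v) w = c w := by
    intro c w
    rw [Finsupp.finset_sum_apply]
    simp [uA, Finsupp.single_apply]
  funext w
  rw [← key c w, ← key c' w, hcc]

noncomputable def tC : Option (Fin l) → (Fin 2 →₀ ℕ)
  | Option.none => Finsupp.single 1 1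
  | Option.some i => Finsupp.single 0 ((i : ℕ) + 1)

noncomputable def uC : Option (Fin l) → ((Fin l ⊕ Fin l') →₀ ℕ)
  | Option.none => 0
  | Option.some i => Finsupp.single (Sum.inl i) 1

noncomputable def Phifun : (Fin l ⊕ Fin l') → MvPolynomial (Fin l ⊕ Fin l') ℤ :=
  fun v => match v with
    | Sum.inl i => MvPolynomial.X (Sum.inl i)
    | Sum.inr j => if (j : ℕ) = 0 then 1 else 0

lemma setY_eq_aeval (g : MvPolynomial (Fin l ⊕ Fin l') ℤ) :
    setY l l' g = MvPolynomial.aeval (Phifun l l') g := rfl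

lemma mapPhi (hl' : 1 ≤ l') :
    MvPolynomial.map
      ((MvPolynomial.aeval (Phifun l l')).toRingHom :
        MvPolynomial (Fin l ⊕ Fin l') ℤ →+* MvPolynomial (Fin l ⊕ Fin l') ℤ)
      (Fpoly l l') = Pgen (tC l) (uC l l') := by
  rw [Fpoly, Pgen, Fintype.sum_option]
  simp only [map_add, map_sum, map_mul, map_pow, MvPolynomial.map_C, MvPolynomial.map_X,
    AlgHom.toRingHom_eq_coe, RingHom.coe_coe, MvPolynomial.aeval_X]
  have h2 : (∑ j : Fin l', MvPolynomial.C (Phifun l l' (Sum.inr j)) *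
      (MvPolynomial.X 1 : MvPolynomial (Fin 2) (MvPolynomial (Fin l ⊕ Fin l') ℤ)) ^ ((j : ℕ) + 1))
      = MvPolynomial.X 1 := by
    rw [Finset.sum_eq_single_of_mem (⟨0, hl'⟩ : Fin l') (Finset.mem_univ _)]
    · simp [Phifun]
    · intro j _ hj
      have : (j : ℕ) ≠ 0 := fun hc => hj (Fin.ext hc)
      simp [Phifun, this]
  have h1 : ∀ i : Fin l, MvPolynomial.C (Phifun l l' (Sum.inl i)) *
      MvPolynomial.X (R := MvPolynomial (Fin l ⊕ Fin l') ℤ) 0 ^ ((i : ℕ) + 1)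
      = MvPolynomial.monomial (tC l (some i)) (MvPolynomial.monomial (uC l l' (some i)) 1) := by
    intro i
    rw [MvPolynomial.C_mul_X_pow_eq_monomial]
    rfl
  have h0 : (MvPolynomial.monomial (tC l (none : Option (Fin l)))
      (MvPolynomial.monomial (uC l l' (none : Option (Fin l))) (1 : ℤ)))
      = MvPolynomial.X 1 := by
    simp only [tC, uC, MvPolynomial.monomial_zero']
    rw [MvPolynomial.C_1]
    rfl
  rw [h0, h2, Finset.sum_congr rfl fun i _ => h1 i, add_comm]

lemma setY_coeff (hl' : 1 ≤ l') (m : Fin 2 →₀ ℕ) :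
    setY l l' (MvPolynomial.coeff m (Fpoly l l' ^ k))
      = MvPolynomial.coeff m (Pgen (tC l) (uC l l') ^ k) := by
  rw [setY_eq_aeval, ← mapPhi l l' hl',
    show ∀ x, MvPolynomial.aeval (Phifun l l') x
      = ((MvPolynomial.aeval (Phifun l l')).toRingHom :
          MvPolynomial (Fin l ⊕ Fin l') ℤ →+* MvPolynomial (Fin l ⊕ Fin l') ℤ) x
      from fun _ => rfl,
    ← MvPolynomial.coeff_map, ← map_pow]

lemma huC : ∀ c : Option (Fin l) → ℕ,
    c ∈ Finset.piAntidiag (Finset.univ : Finset (Option (Fin l))) k →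
    ∀ c' : Option (Fin l) → ℕ,
    c' ∈ Finset.piAntidiag (Finset.univ : Finset (Option (Fin l))) k →
    (∑ o, c o • uC l l' o) = (∑ o, c' o • uC l l' o) → c = c' := by
  intro c hc c' hc' hcc
  have happ : ∀ (c : Option (Fin l) → ℕ) (i : Fin l),
      (∑ o, c o • uC l l' o) (Sum.inl i) = c (some i) := by
    intro c i
    rw [Finsupp.finset_sum_apply, Fintype.sum_option]
    simp [uC, Finsupp.smul_apply, Finsupp.single_apply]
  have hsome : ∀ i, c (some i) = c' (some i) := fun i => by
    rw [← happ c i, ← happ c' i, hcc]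
  have h1 : c none + ∑ i, c (some i) = k := by
    have := (Finset.mem_piAntidiag.mp hc).1
    rwa [Fintype.sum_option] at this
  have h2 : c' none + ∑ i, c' (some i) = k := by
    have := (Finset.mem_piAntidiag.mp hc').1
    rwa [Fintype.sum_option] at this
  have hsum : ∑ i, c (some i) = ∑ i, c' (some i) :=
    Finset.sum_congr rfl fun i _ => hsome i
  have hnone : c none = c' none := by omega
  funext o
  cases o with
  | none => exact hnone
  | some i => exact hsome i

lemma f'_eq (h : ℕ) : f'Coeff l l' k h
    = ∑ i ∈ insert 0 (Finset.Ico 1 h),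
        MvPolynomial.coeff (Finsupp.single 0 i + Finsupp.single 1 (h - i))
          (Fpoly l l' ^ k) := by
  rw [f'Coeff, Finset.sum_insert (by simp)]
  congr 1
  simp

lemma core {V : Type*} [Fintype V] [DecidableEq V]
    (t : V → Fin 2 →₀ ℕ) (u : V → ((Fin l ⊕ Fin l') →₀ ℕ)) (h p : ℕ)
    (hp : p.Prime) (hpk : k < p)
    (hu : ∀ c : V → ℕ, c ∈ Finset.piAntidiag (Finset.univ : Finset V) k →
          ∀ c' : V → ℕ, c' ∈ Finset.piAntidiag (Finset.univ : Finset V) k →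
          (∑ v : V, c v • u v) = (∑ v : V, c' v • u v) → c = c')
    (d : (Fin l ⊕ Fin l') →₀ ℕ)
    (hne : MvPolynomial.coeff d (∑ i ∈ insert 0 (Finset.Ico 1 h),
        MvPolynomial.coeff (Finsupp.single 0 i + Finsupp.single 1 (h - i))
          (Pgen t u ^ k)) ≠ 0) :
    ¬ (p : ℤ) ∣ MvPolynomial.coeff d (∑ i ∈ insert 0 (Finset.Ico 1 h),
        MvPolynomial.coeff (Finsupp.single 0 i + Finsupp.single 1 (h - i))
          (Pgen t u ^ k)) := by
  rw [MvPolynomial.coeff_sum] at hne ⊢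
  refine aux_prime hp hpk _ (sum_dvd_helper _ _ _ ?_ ?_ hne)
  · intro i _ hi
    exact (key t u k hu _ d hi).2
  · intro i _ j _ hi hj
    obtain ⟨⟨c, hck, hct, hcu⟩, -⟩ := key t u k hu _ d hi
    obtain ⟨⟨c', hck', hct', hcu'⟩, -⟩ := key t u k hu _ d hj
    have hmem : c ∈ Finset.piAntidiag (Finset.univ : Finset V) k :=
      Finset.mem_piAntidiag.mpr ⟨by simpa using hck, fun v _ => Finset.mem_univ v⟩
    have hmem' : c' ∈ Finset.piAntidiag (Finset.univ : Finset V) k :=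
      Finset.mem_piAntidiag.mpr ⟨by simpa using hck', fun v _ => Finset.mem_univ v⟩
    have hcc : c = c' := hu c hmem c' hmem' (hcu.trans hcu'.symm)
    have hmm : Finsupp.single (0 : Fin 2) i + Finsupp.single 1 (h - i)
        = Finsupp.single (0 : Fin 2) j + Finsupp.single 1 (h - j) := by
      rw [← hct, ← hct', hcc]
    have := congrArg (fun f : Fin 2 →₀ ℕ => f 0) hmm
    simpa [Finsupp.single_apply] using this

end Cases

/-- If `p` is a prime with `p > k`, then `p` divides no (nonzero) coefficient
of `f_h(l,l',k)`, nor of `f'_h(l,l',k)`, nor of the polynomial obtained from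
`f'_h(l,l',k)` by setting `y₁ = 1` and `y₂ = … = y_{l'} = 0`. -/
theorem prime_not_dvd_coeffs (l l' : ℕ) (hl' : 1 ≤ l') (k h : ℕ)
    (p : ℕ) (hp : p.Prime) (hpk : k < p) :
    (∀ d, MvPolynomial.coeff d (fCoeff l l' k h) ≠ 0 →
      ¬ (p : ℤ) ∣ MvPolynomial.coeff d (fCoeff l l' k h)) ∧
    (∀ d, MvPolynomial.coeff d (f'Coeff l l' k h) ≠ 0 →
      ¬ (p : ℤ) ∣ MvPolynomial.coeff d (f'Coeff l l' k h)) ∧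
    (∀ d, MvPolynomial.coeff d (setY l l' (f'Coeff l l' k h)) ≠ 0 →
      ¬ (p : ℤ) ∣ MvPolynomial.coeff d (setY l l' (f'Coeff l l' k h))) := by
  refine ⟨?_, ?_, ?_⟩
  · intro d hne
    unfold fCoeff at hne ⊢
    rw [Fpoly_eq] at hne ⊢
    exact aux_prime hp hpk _ (key (tA l l') (uA l l') k (huA l l' k) _ d hne).2
  · intro d hne
    rw [f'_eq, Fpoly_eq] at hne ⊢
    exact core l l' k (tA l l') (uA l l') h p hp hpk (huA l l' k) d hne
  · intro d hne
    have hrw : setY l l' (f'Coeff l l' k h)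
        = ∑ i ∈ insert 0 (Finset.Ico 1 h),
            MvPolynomial.coeff (Finsupp.single 0 i + Finsupp.single 1 (h - i))
              (Pgen (tC l) (uC l l') ^ k) := by
      rw [f'_eq, setY_eq_aeval, map_sum]
      exact Finset.sum_congr rfl fun i _ => setY_coeff l l' k hl' _
    rw [hrw] at hne ⊢
    exact core l l' k (tC l) (uC l l') h p hp hpk (huC l l' k) d hne
end
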